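/- arXiv:2205.03640 — 12 statements merged into one kernel-verified Lean document; each statement's English description precedes it below -/
import Mathlib

section
/- Let S and T be monads on a category C and let λ : TS ⇒ ST be a weak distributive law. Define κ := Sμ^T ∘ λT ∘ η^T ST : ST ⇒ ST. Then: (1) κ ∘ κ = κ; (2) κ ∘ λ = λ; (3) κ ∘ η^S η^T = η^S η^T; (4) κ ∘ μ^S μ^T ∘ SλT = μ^S μ^T ∘ SλT ∘ κκ. -/
open CategoryTheory

universe v u

/-- Raw monad data: an endofunctor together with unit and multiplication components
(the monad laws are not required). -/
structure MonadData (C : Type u) [Category.{v} C] where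
  F : C ⥤ C
  unit : ∀ X : C, X ⟶ F.obj X
  mult : ∀ X : C, F.obj (F.obj X) ⟶ F.obj X

variable {C : Type u} [Category.{v} C]

/-- The data underlying a monad. -/
def CategoryTheory.Monad.data (T : Monad C) : MonadData C where
  F := T.toFunctor
  unit X := T.η.app X
  mult X := T.μ.app X

/-- The monad laws (two unitality axioms and associativity) for raw monad data. -/
def MonadData.IsMonad (A : MonadData C) : Prop :=
  (∀ X : C, A.unit (A.F.obj X) ≫ A.mult X = 𝟙 (A.F.obj X)) ∧
  (∀ X : C, A.F.map (A.unit X) ≫ A.mult X = 𝟙 (A.F.obj X)) ∧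
  (∀ X : C, A.F.map (A.mult X) ≫ A.mult X = A.mult (A.F.obj X) ≫ A.mult X)

/-- Axiom (η+) for a law `l : TS ⇒ ST` of the monad `A` (playing `S`) over `B` (playing `T`). -/
def EtaPlus (A B : MonadData C) (l : (A.F ⋙ B.F) ⟶ (B.F ⋙ A.F)) : Prop :=
  ∀ X : C, B.F.map (A.unit X) ≫ l.app X = A.unit (B.F.obj X)

/-- Axiom (μ+): `λ ∘ Tμ^S = μ^S T ∘ Sλ ∘ λS`. -/
def MuPlus (A B : MonadData C) (l : (A.F ⋙ B.F) ⟶ (B.F ⋙ A.F)) : Prop :=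
  ∀ X : C, B.F.map (A.mult X) ≫ l.app X =
    l.app (A.F.obj X) ≫ A.F.map (l.app X) ≫ A.mult (B.F.obj X)

/-- Axiom (η−): `λ ∘ η^T S = Sη^T`. -/
def EtaMinus (A B : MonadData C) (l : (A.F ⋙ B.F) ⟶ (B.F ⋙ A.F)) : Prop :=
  ∀ X : C, B.unit (A.F.obj X) ≫ l.app X = A.F.map (B.unit X)

/-- Axiom (μ−): `λ ∘ μ^T S = Sμ^T ∘ λT ∘ Tλ`. -/
def MuMinus (A B : MonadData C) (l : (A.F ⋙ B.F) ⟶ (B.F ⋙ A.F)) : Prop :=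
  ∀ X : C, B.mult (A.F.obj X) ≫ l.app X =
    B.F.map (l.app X) ≫ l.app (B.F.obj X) ≫ A.F.map (B.mult X)

/-- A weak distributive law satisfies (η+), (μ+) and (μ−). -/
def IsWDL (A B : MonadData C) (l : (A.F ⋙ B.F) ⟶ (B.F ⋙ A.F)) : Prop :=
  EtaPlus A B l ∧ MuPlus A B l ∧ MuMinus A B l

/-- A distributive law satisfies all four axioms. -/
def IsDL (A B : MonadData C) (l : (A.F ⋙ B.F) ⟶ (B.F ⋙ A.F)) : Prop :=
  EtaPlus A B l ∧ MuPlus A B l ∧ EtaMinus A B l ∧ MuMinus A B l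

/-- The natural family `κ := Sμ^T ∘ λT ∘ η^T ST : ST ⇒ ST` associated with a law. -/
def lawKappa (A B : MonadData C) (l : (A.F ⋙ B.F) ⟶ (B.F ⋙ A.F)) (X : C) :
    A.F.obj (B.F.obj X) ⟶ A.F.obj (B.F.obj X) :=
  B.unit (A.F.obj (B.F.obj X)) ≫ l.app (B.F.obj X) ≫ A.F.map (B.mult X)

/-- The Yang–Baxter equation `σT ∘ Sτ ∘ λR = Rλ ∘ τS ∘ Tσ` for laws
`l : TS ⇒ ST`, `s : SR ⇒ RS`, `t : TR ⇒ RT`. -/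
def YangBaxter (Rm Sm Tm : MonadData C)
    (l : (Sm.F ⋙ Tm.F) ⟶ (Tm.F ⋙ Sm.F))
    (s : (Rm.F ⋙ Sm.F) ⟶ (Sm.F ⋙ Rm.F))
    (t : (Rm.F ⋙ Tm.F) ⟶ (Tm.F ⋙ Rm.F)) : Prop :=
  ∀ X : C, l.app (Rm.F.obj X) ≫ Sm.F.map (t.app X) ≫ s.app (Tm.F.obj X) =
    Tm.F.map (s.app X) ≫ t.app (Sm.F.obj X) ≫ Rm.F.map (l.app X)

/-- The composite monad data `S ∘_λ T = (ST, η^S η^T, μ^S μ^T ∘ SλT)` of a distributive law. -/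
def compData (A B : MonadData C) (l : (A.F ⋙ B.F) ⟶ (B.F ⋙ A.F)) : MonadData C where
  F := B.F ⋙ A.F
  unit X := B.unit X ≫ A.unit (B.F.obj X)
  mult X := A.F.map (l.app (B.F.obj X)) ≫ A.F.map (A.F.map (B.mult X)) ≫ A.mult (B.F.obj X)

/-- The weak composite monad data `S •_λ T` built from a splitting `(K, p, i)` of `κ`. -/
def wcompData (A B : MonadData C) (l : (A.F ⋙ B.F) ⟶ (B.F ⋙ A.F))
    (K : C ⥤ C) (p : (B.F ⋙ A.F) ⟶ K) (i : K ⟶ (B.F ⋙ A.F)) : MonadData C where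
  F := K
  unit X := B.unit X ≫ A.unit (B.F.obj X) ≫ p.app X
  mult X := i.app (K.obj X) ≫ A.F.map (B.F.map (i.app X)) ≫ A.F.map (l.app (B.F.obj X)) ≫
    A.F.map (A.F.map (B.mult X)) ≫ A.mult (B.F.obj X) ≫ p.app X

/-!
Write `ρ := Sμ^T ∘ λT : TST ⇒ ST`, so that `κ = ρ ∘ η^T ST`. By (μ−), `ρ` is an associative,
not necessarily unital, `T`-action on `ST`. For any associative action `a`, the endomorphism
`e := a ∘ η^T` commutes with action maps, satisfies `a ∘ Te = a`, and fixes every action map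
out of a free action; in particular `e ∘ e = e`. The law `λ` lifts an action `a` on `M` to the
action `Sa ∘ λ` on `SM`; (μ−) makes lifting preserve associativity, and (η+), (μ+) make `η^S`
and `μ^S` action maps. Hence `λ`, `η^S T` and the multiplication `μ^S T ∘ Sρ` of the composite
are action maps, which gives the four identities.
-/

section Action

variable (T : Monad C)

def IsAssocAction {M : C} (a : T.obj M ⟶ M) : Prop :=
  T.map a ≫ a = T.μ.app M ≫ a

def IsActionHom {M N : C} (a : T.obj M ⟶ M) (b : T.obj N ⟶ N) (g : M ⟶ N) : Prop :=
  T.map g ≫ b = a ≫ g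

variable {T}

theorem isAssocAction_μ (X : C) : IsAssocAction T (T.μ.app X) :=
  T.assoc X

theorem IsActionHom.comp {M N P : C} {a : T.obj M ⟶ M} {b : T.obj N ⟶ N} {c : T.obj P ⟶ P}
    {g : M ⟶ N} {f : N ⟶ P} (hg : IsActionHom T a b g) (hf : IsActionHom T b c f) :
    IsActionHom T a c (g ≫ f) := by
  unfold IsActionHom at *
  rw [Functor.map_comp, Category.assoc, hf, reassoc_of% hg]

theorem IsActionHom.comp_unit_comp {M N : C} {a : T.obj M ⟶ M} {b : T.obj N ⟶ N} {g : M ⟶ N}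
    (hg : IsActionHom T a b g) : g ≫ T.η.app N ≫ b = (T.η.app M ≫ a) ≫ g := by
  have hη : g ≫ T.η.app N = T.η.app M ≫ T.map g := T.η.naturality g
  rw [reassoc_of% hη, hg, Category.assoc]

theorem IsActionHom.comp_unit_comp_of_free {M N : C} {b : T.obj N ⟶ N} {g : T.obj M ⟶ N}
    (hg : IsActionHom T (T.μ.app M) b g) : g ≫ T.η.app N ≫ b = g := by
  rw [hg.comp_unit_comp, Category.assoc, Monad.left_unit_assoc]

theorem IsAssocAction.unit_comp_idem {M : C} {a : T.obj M ⟶ M} (ha : IsAssocAction T a) :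
    (T.η.app M ≫ a) ≫ T.η.app M ≫ a = T.η.app M ≫ a := by
  rw [Category.assoc, IsActionHom.comp_unit_comp_of_free ha]

theorem IsAssocAction.map_unit_comp_comp {M : C} {a : T.obj M ⟶ M} (ha : IsAssocAction T a) :
    T.map (T.η.app M ≫ a) ≫ a = a := by
  rw [Functor.map_comp, Category.assoc, ha]
  simp

end Action

section Lift

variable {S T : Monad C} (l : (S.toFunctor ⋙ T.toFunctor) ⟶ (T.toFunctor ⋙ S.toFunctor))

def liftAction {M : C} (a : T.obj M ⟶ M) : T.obj (S.obj M) ⟶ S.obj M :=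
  l.app M ≫ S.map a

variable {l}

theorem IsAssocAction.liftAction (hMuMinus : MuMinus S.data T.data l) {M : C} {a : T.obj M ⟶ M}
    (ha : IsAssocAction T a) : IsAssocAction T (liftAction l a) := by
  have hμ : T.μ.app (S.obj M) ≫ l.app M = T.map (l.app M) ≫ l.app (T.obj M) ≫
      S.map (T.μ.app M) := hMuMinus M
  have hl : T.map (S.map a) ≫ l.app M = l.app (T.obj M) ≫ S.map (T.map a) := l.naturality a
  unfold IsAssocAction _root_.liftAction at *
  rw [Functor.map_comp, Category.assoc, reassoc_of% hl, ← S.map_comp, ha, S.map_comp,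
    reassoc_of% hμ]

theorem IsActionHom.map_liftAction {M N : C} {a : T.obj M ⟶ M} {b : T.obj N ⟶ N} {g : M ⟶ N}
    (hg : IsActionHom T a b g) : IsActionHom T (liftAction l a) (liftAction l b) (S.map g) := by
  have hl : T.map (S.map g) ≫ l.app N = l.app M ≫ S.map (T.map g) := l.naturality g
  unfold IsActionHom liftAction at *
  rw [reassoc_of% hl, ← S.map_comp, hg, S.map_comp, Category.assoc]

theorem isActionHom_η_liftAction (hEtaPlus : EtaPlus S.data T.data l) {M : C} (a : T.obj M ⟶ M) :
    IsActionHom T a (liftAction l a) (S.η.app M) := by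
  have hη : T.map (S.η.app M) ≫ l.app M = S.η.app (T.obj M) := hEtaPlus M
  unfold IsActionHom liftAction
  rw [reassoc_of% hη]
  exact (S.η.naturality a).symm

theorem isActionHom_μ_liftAction (hMuPlus : MuPlus S.data T.data l) {M : C} (a : T.obj M ⟶ M) :
    IsActionHom T (liftAction l (liftAction l a)) (liftAction l a) (S.μ.app M) := by
  have hμ : T.map (S.μ.app M) ≫ l.app M =
      l.app (S.obj M) ≫ S.map (l.app M) ≫ S.μ.app (T.obj M) := hMuPlus M
  unfold IsActionHom liftAction
  rw [reassoc_of% hμ, ← S.μ.naturality a]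
  simp only [Functor.comp_map, Functor.map_comp, Category.assoc]

end Lift

/-- Lemma 3.7 of the paper. For a weak distributive law
`λ : TS ⇒ ST`, the natural transformation `κ := Sμ^T ∘ λT ∘ η^T ST` satisfies:
(1) `κ ∘ κ = κ`; (2) `κ ∘ λ = λ`; (3) `κ ∘ η^S η^T = η^S η^T`;
(4) `κ ∘ μ^S μ^T ∘ SλT = μ^S μ^T ∘ SλT ∘ κκ`. -/
theorem kappa_equations {C : Type u} [Category.{v} C] (S T : Monad C)
    (l : (S.toFunctor ⋙ T.toFunctor) ⟶ (T.toFunctor ⋙ S.toFunctor))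
    (h : IsWDL S.data T.data l) :
    (∀ X : C, lawKappa S.data T.data l X ≫ lawKappa S.data T.data l X =
      lawKappa S.data T.data l X) ∧
    (∀ X : C, l.app X ≫ lawKappa S.data T.data l X = l.app X) ∧
    (∀ X : C, (S.η.app X ≫ S.map (T.η.app X)) ≫ lawKappa S.data T.data l X =
      S.η.app X ≫ S.map (T.η.app X)) ∧
    (∀ X : C,
      (S.map (l.app (T.obj X)) ≫ S.map (S.map (T.μ.app X)) ≫ S.μ.app (T.obj X)) ≫
          lawKappa S.data T.data l X =
      (lawKappa S.data T.data l (S.obj (T.obj X)) ≫ S.map (T.map (lawKappa S.data T.data l X))) ≫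
        S.map (l.app (T.obj X)) ≫ S.map (S.map (T.μ.app X)) ≫ S.μ.app (T.obj X)) := by
  obtain ⟨hEtaPlus, hMuPlus, hMuMinus⟩ := h
  let ρ (X : C) : T.obj (S.obj (T.obj X)) ⟶ S.obj (T.obj X) := liftAction l (T.μ.app X)
  have hρ (X : C) : IsAssocAction T (ρ X) := (isAssocAction_μ X).liftAction hMuMinus
  have hκ (X : C) : T.η.app (S.obj (T.obj X)) ≫ l.app (T.obj X) ≫ S.map (T.μ.app X) =
      T.η.app _ ≫ ρ X := rfl
  have hmult (X : C) :
      S.map (l.app (T.obj X)) ≫ S.map (S.map (T.μ.app X)) ≫ S.μ.app (T.obj X) =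
        S.map (ρ X) ≫ S.μ.app (T.obj X) := by
    rw [← S.map_comp_assoc]; rfl
  dsimp only [lawKappa, Monad.data]
  simp only [hκ, hmult]
  refine ⟨fun X => (hρ X).unit_comp_idem, fun X => ?_, fun X => ?_, fun X => ?_⟩
  · have hl : IsActionHom T (T.μ.app (S.obj X)) (ρ X) (l.app X) := (hMuMinus X).symm
    exact hl.comp_unit_comp_of_free
  · rw [← S.η.naturality, Category.assoc,
      (isActionHom_η_liftAction hEtaPlus (T.μ.app X)).comp_unit_comp_of_free]
  · have hm : IsActionHom T (ρ (S.obj (T.obj X))) (ρ X) (S.map (ρ X) ≫ S.μ.app (T.obj X)) :=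
      (IsActionHom.map_liftAction (hρ X)).comp (isActionHom_μ_liftAction hMuPlus _)
    rw [Category.assoc _ (S.map _), ← S.map_comp_assoc, (hρ X).map_unit_comp_comp]
    exact hm.comp_unit_comp
end

section
/- Let S and T be monads on a category C and let γ : S ⇒ T be a monad morphism, i._e. γ ∘ η^S = η^T and γ ∘ μ^S = μ^T ∘ γγ. Then η^S μ^T ∘ Tγ : TS ⇒ ST is a weak distributive law (it satisfies axioms (η+), (μ+), and (μ−)). -/
open CategoryTheory

universe v u

variable {C : Type u} [Category.{v} C]

/-- The trivial law `η^S μ^T ∘ Tγ : TS ⇒ ST` induced by a natural transformation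
`γ : S ⇒ T`. -/
def trivLaw {C : Type u} [Category.{v} C] (S T : Monad C)
    (γ : S.toFunctor ⟶ T.toFunctor) :
    (S.toFunctor ⋙ T.toFunctor) ⟶ (T.toFunctor ⋙ S.toFunctor) :=
  Functor.whiskerRight γ T.toFunctor ≫ T.μ ≫ Functor.whiskerLeft T.toFunctor S.η

/-!
Write `ρ := μ^T ∘ Tγ : TS ⇒ T`. Because `γ` is a monad morphism, `ρ` is a right `S`-action on `T`,
and for any `γ` it commutes with `μ^T`. The law is `λ = η^S T ∘ ρ`, and each axiom reduces to one
of these properties of `ρ` once the `η^S` factors are moved to the end by naturality and cancelled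
by `μ^S ∘ Sη^S = 1` (for (μ+)) or by the unit of the action (for (μ−)).
-/

variable (S T : Monad C)

section Action

variable (ρ : S.toFunctor ⋙ T.toFunctor ⟶ T.toFunctor)

def lawOfAction : S.toFunctor ⋙ T.toFunctor ⟶ T.toFunctor ⋙ S.toFunctor :=
  ρ ≫ Functor.whiskerLeft T.toFunctor S.η

variable {S T}

@[simp]
lemma lawOfAction_app (X : C) : (lawOfAction S T ρ).app X = ρ.app X ≫ S.η.app (T.obj X) := rfl

lemma etaPlus_lawOfAction (hunit : ∀ X, T.map (S.η.app X) ≫ ρ.app X = 𝟙 _) :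
    EtaPlus S.data T.data (lawOfAction S T ρ) := fun X => by
  simp [Monad.data, reassoc_of% hunit X]

lemma muPlus_lawOfAction
    (hassoc : ∀ X, T.map (S.μ.app X) ≫ ρ.app X = ρ.app (S.obj X) ≫ ρ.app X) :
    MuPlus S.data T.data (lawOfAction S T ρ) := fun X => by
  simp only [Monad.data, lawOfAction_app, Functor.map_comp, Category.assoc, Monad.right_unit,
    Functor.id_obj, Category.comp_id]
  rw [← S.unit_naturality, reassoc_of% hassoc X]

lemma muMinus_lawOfAction (hunit : ∀ X, T.map (S.η.app X) ≫ ρ.app X = 𝟙 _)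
    (hlin : ∀ X, T.μ.app (S.obj X) ≫ ρ.app X = T.map (ρ.app X) ≫ T.μ.app X) :
    MuMinus S.data T.data (lawOfAction S T ρ) := fun X => by
  simp only [Monad.data, lawOfAction_app, Functor.map_comp, Category.assoc,
    ← S.unit_naturality, reassoc_of% hunit (T.obj X), reassoc_of% hlin X]

end Action

section Morphism

def actionOfHom (γ : S.toFunctor ⟶ T.toFunctor) : S.toFunctor ⋙ T.toFunctor ⟶ T.toFunctor :=
  Functor.whiskerRight γ T.toFunctor ≫ T.μ

variable {S T} (γ : S.toFunctor ⟶ T.toFunctor)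

@[simp]
lemma actionOfHom_app (X : C) : (actionOfHom S T γ).app X = T.map (γ.app X) ≫ T.μ.app X := rfl

lemma trivLaw_eq_lawOfAction : trivLaw S T γ = lawOfAction S T (actionOfHom S T γ) := by
  ext X
  simp [trivLaw]

lemma actionOfHom_unit (hη : ∀ X, S.η.app X ≫ γ.app X = T.η.app X) (X : C) :
    T.map (S.η.app X) ≫ (actionOfHom S T γ).app X = 𝟙 _ := by
  simp [← T.map_comp_assoc, hη]

lemma actionOfHom_assoc
    (hμ : ∀ X, S.μ.app X ≫ γ.app X = γ.app (S.obj X) ≫ T.map (γ.app X) ≫ T.μ.app X) (X : C) :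
    T.map (S.μ.app X) ≫ (actionOfHom S T γ).app X =
      (actionOfHom S T γ).app (S.obj X) ≫ (actionOfHom S T γ).app X := by
  rw [actionOfHom_app, ← T.map_comp_assoc, hμ]
  simp only [actionOfHom_app, Functor.map_comp, Category.assoc, T.assoc, T.mu_naturality_assoc]

lemma actionOfHom_linear (X : C) :
    T.μ.app (S.obj X) ≫ (actionOfHom S T γ).app X =
      T.map ((actionOfHom S T γ).app X) ≫ T.μ.app X := by
  simp only [actionOfHom_app, Functor.map_comp, Category.assoc, T.assoc, T.mu_naturality_assoc]

end Morphism

/-- If `γ : S ⇒ T` is a monad morphism, then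
`η^S μ^T ∘ Tγ : TS ⇒ ST` is a weak distributive law. -/
theorem trivial_wdl {C : Type u} [Category.{v} C] (S T : Monad C)
    (γ : S.toFunctor ⟶ T.toFunctor)
    (hη : ∀ X : C, S.η.app X ≫ γ.app X = T.η.app X)
    (hμ : ∀ X : C, S.μ.app X ≫ γ.app X = γ.app (S.obj X) ≫ T.map (γ.app X) ≫ T.μ.app X) :
    IsWDL S.data T.data (trivLaw S T γ) := by
  rw [trivLaw_eq_lawOfAction]
  exact ⟨etaPlus_lawOfAction _ (actionOfHom_unit γ hη),
    muPlus_lawOfAction _ (actionOfHom_assoc γ hμ),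
    muMinus_lawOfAction _ (actionOfHom_unit γ hη) (actionOfHom_linear γ)⟩
end

section
/- (Cheng) Let R, S, T be monads on a category C and let λ : TS ⇒ ST, σ : SR ⇒ RS, τ : TR ⇒ RT be distributive laws satisfying the Yang–Baxter equation σT ∘ Sτ ∘ λR = Rλ ∘ τS ∘ Tσ. Then: (1) Rλ ∘ τS : T(RS) ⇒ (RS)T is a distributive law of the composite monad R∘_σ S over T; (2) σT ∘ Sτ : (ST)R ⇒ R(ST) is a distributive law of R over the composite monad S∘_λ T; (3) the resulting monads (R∘_σ S)∘T and R∘(S∘_λ T) coincide: both have underlying functor RST, unit η^R η^S η^T, and the same multiplication. -/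
/-!
Every axiom for the two composite laws unfolds, componentwise, into the corresponding axioms of
`λ`, `σ`, `τ` plus naturality. The Yang–Baxter equation enters exactly twice, in (μ+) for
`Rλ ∘ τS` and in (μ−) for `σT ∘ Sτ`, where it reorders the three laws. The two resulting
multiplications on `RST` differ only by one naturality square of `σ`.
-/

open CategoryTheory

universe v u

variable {C : Type u} [Category.{v} C]

section Cheng

variable {C : Type u} [Category.{v} C] (R S T : Monad C)

/-- The first composite law `Rλ ∘ τS : T(RS) ⇒ (RS)T`. -/
def chengPhi (l : (S.toFunctor ⋙ T.toFunctor) ⟶ (T.toFunctor ⋙ S.toFunctor))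
    (t : (R.toFunctor ⋙ T.toFunctor) ⟶ (T.toFunctor ⋙ R.toFunctor)) :
    ((S.toFunctor ⋙ R.toFunctor) ⋙ T.toFunctor) ⟶
      (T.toFunctor ⋙ (S.toFunctor ⋙ R.toFunctor)) :=
  Functor.whiskerLeft S.toFunctor t ≫ Functor.whiskerRight l R.toFunctor

/-- The second composite law `σT ∘ Sτ : (ST)R ⇒ R(ST)`. -/
def chengPsi (s : (R.toFunctor ⋙ S.toFunctor) ⟶ (S.toFunctor ⋙ R.toFunctor))
    (t : (R.toFunctor ⋙ T.toFunctor) ⟶ (T.toFunctor ⋙ R.toFunctor)) :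
    (R.toFunctor ⋙ (T.toFunctor ⋙ S.toFunctor)) ⟶
      ((T.toFunctor ⋙ S.toFunctor) ⋙ R.toFunctor) :=
  Functor.whiskerRight t S.toFunctor ≫ Functor.whiskerLeft T.toFunctor s

namespace CategoryTheory.NatTrans

variable {A B B' E : Type*} [Category A] [Category B] [Category B'] [Category E]
  {F : A ⥤ B} {G : B ⥤ E} {H : A ⥤ B'} {K : B' ⥤ E} (α : F ⋙ G ⟶ H ⋙ K)
  {X Y : A} (f : X ⟶ Y)

-- `α.naturality` with `(F ⋙ G).map f` unfolded, so that it can be used by `rw`.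
theorem naturality_comp_comp : G.map (F.map f) ≫ α.app Y = α.app X ≫ K.map (H.map f) :=
  α.naturality f

theorem naturality_comp_comp_assoc {Z : E} (h : K.obj (H.obj Y) ⟶ Z) :
    G.map (F.map f) ≫ α.app Y ≫ h = α.app X ≫ K.map (H.map f) ≫ h :=
  α.naturality_assoc f h

end CategoryTheory.NatTrans

section Laws

variable {R S T}
variable {l : (S.toFunctor ⋙ T.toFunctor) ⟶ (T.toFunctor ⋙ S.toFunctor)}
  {s : (R.toFunctor ⋙ S.toFunctor) ⟶ (S.toFunctor ⋙ R.toFunctor)}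
  {t : (R.toFunctor ⋙ T.toFunctor) ⟶ (T.toFunctor ⋙ R.toFunctor)}

theorem chengPhi_app (X : C) : (chengPhi R S T l t).app X = t.app (S.obj X) ≫ R.map (l.app X) :=
  rfl

theorem chengPsi_app (X : C) : (chengPsi R S T s t).app X = S.map (t.app X) ≫ s.app (T.obj X) :=
  rfl

theorem etaPlus_chengPhi (hl : EtaPlus S.data T.data l) (ht : EtaPlus R.data T.data t) :
    EtaPlus (compData R.data S.data s) T.data (chengPhi R S T l t) := by
  intro X
  dsimp only [EtaPlus, Monad.data] at hl ht
  dsimp only [compData, Monad.data, chengPhi_app, Functor.comp_obj, Functor.comp_map]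
  rw [Functor.map_comp_assoc, reassoc_of% ht, ← R.unit_naturality, reassoc_of% hl]

theorem muPlus_chengPhi (hl : MuPlus S.data T.data l) (ht : MuPlus R.data T.data t)
    (yb : YangBaxter R.data S.data T.data l s t) :
    MuPlus (compData R.data S.data s) T.data (chengPhi R S T l t) := by
  intro X
  dsimp only [MuPlus, YangBaxter, Monad.data] at hl ht yb
  dsimp only [compData, Monad.data, chengPhi_app, Functor.comp_obj, Functor.comp_map]
  have interchange : T.map (s.app (S.obj X)) ≫ T.map (R.map (S.μ.app X)) ≫ t.app (S.obj X) ≫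
      R.map (l.app X) = l.app (R.obj (S.obj X)) ≫ S.map (t.app (S.obj X)) ≫
        S.map (R.map (l.app X)) ≫ s.app (S.obj (T.obj X)) ≫ R.map (S.μ.app (T.obj X)) := by
    rw [NatTrans.naturality_comp_comp_assoc, ← R.map_comp, hl, R.map_comp, R.map_comp,
      ← reassoc_of% yb, ← NatTrans.naturality_comp_comp_assoc]
    rfl
  have interchangeR := R.congr_map interchange
  simp only [Functor.map_comp] at interchangeR
  simp only [Functor.map_comp, Category.assoc]
  rw [reassoc_of% ht, ← R.mu_naturality, NatTrans.naturality_comp_comp_assoc,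
    NatTrans.naturality_comp_comp_assoc, reassoc_of% interchangeR]

theorem etaMinus_chengPhi (hl : EtaMinus S.data T.data l) (ht : EtaMinus R.data T.data t) :
    EtaMinus (compData R.data S.data s) T.data (chengPhi R S T l t) := by
  intro X
  dsimp only [EtaMinus, Monad.data] at hl ht
  dsimp only [compData, Monad.data, chengPhi_app, Functor.comp_obj, Functor.comp_map]
  rw [reassoc_of% ht, ← R.map_comp, hl]

theorem muMinus_chengPhi (hl : MuMinus S.data T.data l) (ht : MuMinus R.data T.data t) :
    MuMinus (compData R.data S.data s) T.data (chengPhi R S T l t) := by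
  intro X
  dsimp only [MuMinus, Monad.data] at hl ht
  dsimp only [compData, Monad.data, chengPhi_app, Functor.comp_obj, Functor.comp_map]
  have hlR := R.congr_map (hl X)
  simp only [Functor.map_comp] at hlR
  simp only [Functor.map_comp, Category.assoc]
  rw [reassoc_of% ht, hlR, ← NatTrans.naturality_comp_comp_assoc]
  rfl

theorem isDL_chengPhi (hl : IsDL S.data T.data l) (ht : IsDL R.data T.data t)
    (yb : YangBaxter R.data S.data T.data l s t) :
    IsDL (compData R.data S.data s) T.data (chengPhi R S T l t) :=
  ⟨etaPlus_chengPhi hl.1 ht.1, muPlus_chengPhi hl.2.1 ht.2.1 yb,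
    etaMinus_chengPhi hl.2.2.1 ht.2.2.1, muMinus_chengPhi hl.2.2.2 ht.2.2.2⟩

theorem etaPlus_chengPsi (hs : EtaPlus R.data S.data s) (ht : EtaPlus R.data T.data t) :
    EtaPlus R.data (compData S.data T.data l) (chengPsi R S T s t) := by
  intro X
  dsimp only [EtaPlus, Monad.data] at hs ht
  dsimp only [compData, Monad.data, chengPsi_app, Functor.comp_obj, Functor.comp_map]
  rw [← S.map_comp_assoc, ht, hs]

theorem muPlus_chengPsi (hs : MuPlus R.data S.data s) (ht : MuPlus R.data T.data t) :
    MuPlus R.data (compData S.data T.data l) (chengPsi R S T s t) := by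
  intro X
  dsimp only [MuPlus, Monad.data] at hs ht
  dsimp only [compData, Monad.data, chengPsi_app, Functor.comp_obj, Functor.comp_map]
  have htS := S.congr_map (ht X)
  simp only [Functor.map_comp] at htS
  simp only [Functor.map_comp, Category.assoc]
  rw [reassoc_of% htS, hs, NatTrans.naturality_comp_comp_assoc]

theorem etaMinus_chengPsi (hs : EtaMinus R.data S.data s) (ht : EtaMinus R.data T.data t) :
    EtaMinus R.data (compData S.data T.data l) (chengPsi R S T s t) := by
  intro X
  dsimp only [EtaMinus, Monad.data] at hs ht
  dsimp only [compData, Monad.data, chengPsi_app, Functor.comp_obj, Functor.comp_map]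
  rw [Category.assoc, ← S.unit_naturality_assoc, reassoc_of% ht, hs, R.map_comp]

theorem muMinus_chengPsi (hs : MuMinus R.data S.data s) (ht : MuMinus R.data T.data t)
    (yb : YangBaxter R.data S.data T.data l s t) :
    MuMinus R.data (compData S.data T.data l) (chengPsi R S T s t) := by
  intro X
  dsimp only [MuMinus, YangBaxter, Monad.data] at hs ht yb
  dsimp only [compData, Monad.data, chengPsi_app, Functor.comp_obj, Functor.comp_map]
  have htS := S.congr_map (ht X)
  simp only [Functor.map_comp] at htS
  have interchange : l.app (T.obj (R.obj X)) ≫ S.map (T.μ.app (R.obj X)) ≫ S.map (t.app X) ≫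
      s.app (T.obj X) = T.map (S.map (t.app X)) ≫ T.map (s.app (T.obj X)) ≫
        t.app (S.obj (T.obj X)) ≫ R.map (l.app (T.obj X)) ≫ R.map (S.map (T.μ.app X)) := by
    rw [reassoc_of% htS, NatTrans.naturality_comp_comp, ← NatTrans.naturality_comp_comp_assoc,
      reassoc_of% yb]
  have interchangeS := S.congr_map interchange
  simp only [Functor.map_comp] at interchangeS
  simp only [Functor.map_comp, Category.assoc]
  rw [← S.mu_naturality_assoc, hs, reassoc_of% interchangeS, NatTrans.naturality_comp_comp_assoc,
    NatTrans.naturality_comp_comp_assoc]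

theorem isDL_chengPsi (hs : IsDL R.data S.data s) (ht : IsDL R.data T.data t)
    (yb : YangBaxter R.data S.data T.data l s t) :
    IsDL R.data (compData S.data T.data l) (chengPsi R S T s t) :=
  ⟨etaPlus_chengPsi hs.1 ht.1, muPlus_chengPsi hs.2.1 ht.2.1,
    etaMinus_chengPsi hs.2.2.1 ht.2.2.1, muMinus_chengPsi hs.2.2.2 ht.2.2.2 yb⟩

theorem compData_chengPhi_mult_eq_compData_chengPsi_mult (X : C) :
    (compData (compData R.data S.data s) T.data (chengPhi R S T l t)).mult X =
      (compData R.data (compData S.data T.data l) (chengPsi R S T s t)).mult X := by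
  dsimp only [compData, Monad.data, chengPhi_app, chengPsi_app, Functor.comp_obj, Functor.comp_map]
  have hsR := R.congr_map (s.naturality_comp_comp (l.app (T.obj X) ≫ S.map (T.μ.app X)))
  simp only [Functor.map_comp, Category.assoc] at hsR ⊢
  rw [reassoc_of% hsR]

end Laws

/-- Cheng's theorem for three monads. Given distributive laws
`λ : TS ⇒ ST`, `σ : SR ⇒ RS`, `τ : TR ⇒ RT` satisfying the Yang–Baxter equation:
(1) `Rλ ∘ τS` is a distributive law of `R ∘_σ S` over `T`;
(2) `σT ∘ Sτ` is a distributive law of `R` over `S ∘_λ T`;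
(3) the two composite monads coincide: both have underlying functor `RST`, unit
`η^R η^S η^T`, and the same multiplication. -/
theorem cheng
    (l : (S.toFunctor ⋙ T.toFunctor) ⟶ (T.toFunctor ⋙ S.toFunctor))
    (s : (R.toFunctor ⋙ S.toFunctor) ⟶ (S.toFunctor ⋙ R.toFunctor))
    (t : (R.toFunctor ⋙ T.toFunctor) ⟶ (T.toFunctor ⋙ R.toFunctor))
    (hl : IsDL S.data T.data l) (hs : IsDL R.data S.data s) (ht : IsDL R.data T.data t)
    (yb : YangBaxter R.data S.data T.data l s t) :
    IsDL (compData R.data S.data s) T.data (chengPhi R S T l t) ∧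
    IsDL R.data (compData S.data T.data l) (chengPsi R S T s t) ∧
    (∀ X : C, (compData (compData R.data S.data s) T.data (chengPhi R S T l t)).unit X =
      T.η.app X ≫ S.η.app (T.obj X) ≫ R.η.app (S.obj (T.obj X))) ∧
    (∀ X : C, (compData R.data (compData S.data T.data l) (chengPsi R S T s t)).unit X =
      T.η.app X ≫ S.η.app (T.obj X) ≫ R.η.app (S.obj (T.obj X))) ∧
    (∀ X : C, (compData (compData R.data S.data s) T.data (chengPhi R S T l t)).mult X =
      (compData R.data (compData S.data T.data l) (chengPsi R S T s t)).mult X) :=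
  ⟨isDL_chengPhi hl ht yb, isDL_chengPsi hs ht yb, fun _ => rfl, fun _ => Category.assoc _ _ _,
    compData_chengPhi_mult_eq_compData_chengPsi_mult⟩

end Cheng
end

section
/- Let R, S, T be monads on a category C, let σ : SR ⇒ RS be a weak distributive law with idempotent κ^σ := Rμ^S ∘ σS ∘ η^S RS, and let λ : TS ⇒ ST, τ : TR ⇒ RT be natural transformations satisfying the Yang–Baxter equation σT ∘ Sτ ∘ λR = Rλ ∘ τS ∘ Tσ. If λ satisfies axioms (η+) and (μ+), then κ^σ T ∘ Rλ ∘ τS = Rλ ∘ τS ∘ Tκ^σ. -/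
open CategoryTheory

universe v u

variable {C : Type u} [Category.{v} C]

/-- Lemma 4.2 of the paper. If `σ : SR ⇒ RS` is a weak
distributive law with idempotent `κ^σ := Rμ^S ∘ σS ∘ η^S RS`, and `λ`, `τ`
satisfy the Yang–Baxter equation, with `λ` satisfying (η+) and (μ+), then
`κ^σ T ∘ Rλ ∘ τS = Rλ ∘ τS ∘ Tκ^σ`. -/
theorem kappa_sigma_commutes {C : Type u} [Category.{v} C] (R S T : Monad C)
    (l : (S.toFunctor ⋙ T.toFunctor) ⟶ (T.toFunctor ⋙ S.toFunctor))
    (s : (R.toFunctor ⋙ S.toFunctor) ⟶ (S.toFunctor ⋙ R.toFunctor))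
    (t : (R.toFunctor ⋙ T.toFunctor) ⟶ (T.toFunctor ⋙ R.toFunctor))
    (hs : IsWDL R.data S.data s)
    (hlEtaP : EtaPlus S.data T.data l) (hlMuP : MuPlus S.data T.data l)
    (yb : YangBaxter R.data S.data T.data l s t) :
    ∀ X : C, t.app (S.obj X) ≫ R.map (l.app X) ≫ lawKappa R.data S.data s (T.obj X) =
      T.map (lawKappa R.data S.data s X) ≫ t.app (S.obj X) ≫ R.map (l.app X) := by
  intro X
  have hEta := hlEtaP (R.obj (S.obj X))
  have hMu := hlMuP X
  have hYB := yb (S.obj X)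
  simp only [Monad.data, Functor.comp_obj, Functor.comp_map] at hEta hMu hYB
  simp only [lawKappa, Monad.data, Functor.comp_obj, Functor.map_comp, Category.assoc]
  have ht : T.map (R.map (S.μ.app X)) ≫ t.app (S.obj X) =
      t.app (S.obj (S.obj X)) ≫ R.map (T.map (S.μ.app X)) := by
    simpa using t.naturality (S.μ.app X)
  have hη1 : ∀ {Y Z : C} (f : Y ⟶ Z), f ≫ S.η.app Z = S.η.app Y ≫ S.map f := by
    intro Y Z f; simpa using (S.η.naturality f)
  have hsnat : S.map (R.map (l.app X)) ≫ s.app (S.obj (T.obj X)) =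
      s.app (T.obj (S.obj X)) ≫ R.map (S.map (l.app X)) := by
    simpa using s.naturality (l.app X)
  rw [reassoc_of% ht, ← Functor.map_comp, hMu, Functor.map_comp, Functor.map_comp,
    ← reassoc_of% hYB, reassoc_of% hEta, ← reassoc_of% (hη1 (t.app (S.obj X))),
    ← reassoc_of% hsnat, reassoc_of% (hη1 (R.map (l.app X)))]
end

section
/- Let R, S, T be monads on a category C, let λ : TS ⇒ ST be a weak distributive law with idempotent κ^λ := Sμ^T ∘ λT ∘ η^T ST, and let σ : SR ⇒ RS, τ : TR ⇒ RT be natural transformations satisfying the Yang–Baxter equation σT ∘ Sτ ∘ λR = Rλ ∘ τS ∘ Tσ. If τ satisfies axioms (η−) and (μ−), then Rκ^λ ∘ σT ∘ Sτ = σT ∘ Sτ ∘ κ^λ R. -/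
open CategoryTheory

universe v u

variable {C : Type u} [Category.{v} C]

/-- Lemma 4.4 of the paper. If `λ : TS ⇒ ST` is a weak
distributive law with idempotent `κ^λ := Sμ^T ∘ λT ∘ η^T ST`, and `σ`, `τ`
satisfy the Yang–Baxter equation, with `τ` satisfying (η−) and (μ−), then
`Rκ^λ ∘ σT ∘ Sτ = σT ∘ Sτ ∘ κ^λ R`. -/
theorem kappa_lambda_commutes {C : Type u} [Category.{v} C] (R S T : Monad C)
    (l : (S.toFunctor ⋙ T.toFunctor) ⟶ (T.toFunctor ⋙ S.toFunctor))
    (s : (R.toFunctor ⋙ S.toFunctor) ⟶ (S.toFunctor ⋙ R.toFunctor))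
    (t : (R.toFunctor ⋙ T.toFunctor) ⟶ (T.toFunctor ⋙ R.toFunctor))
    (hl : IsWDL S.data T.data l)
    (htEtaM : EtaMinus R.data T.data t) (htMuM : MuMinus R.data T.data t)
    (yb : YangBaxter R.data S.data T.data l s t) :
    ∀ X : C, S.map (t.app X) ≫ s.app (T.obj X) ≫ R.map (lawKappa S.data T.data l X) =
      lawKappa S.data T.data l (R.obj X) ≫ S.map (t.app X) ≫ s.app (T.obj X) := by
  intro X
  symm
  have hMuM := htMuM X
  have hEtaM := htEtaM (S.obj (T.obj X))
  simp only [MuMinus, EtaMinus, Monad.data] at hMuM hEtaM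
  have hln := l.naturality (t.app X)
  have hsn := s.naturality (T.μ.app X)
  have hyb := yb (T.obj X)
  simp only [YangBaxter, Monad.data] at hyb
  have hηn := T.η.naturality (S.map (t.app X) ≫ s.app (T.obj X))
  simp only [Functor.comp_map, Functor.id_map, Functor.map_comp, Functor.comp_obj,
    Category.assoc] at hln hsn hηn hyb hMuM hEtaM ⊢
  simp only [lawKappa, Monad.data, Functor.map_comp, Category.assoc]
  slice_lhs 3 4 => rw [← Functor.map_comp, hMuM]
  simp only [Functor.map_comp, Category.assoc]
  slice_lhs 2 3 => rw [← hln]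
  slice_lhs 5 6 => rw [hsn]
  slice_lhs 3 5 => rw [hyb]
  slice_lhs 1 3 => rw [← hηn]
  slice_lhs 3 4 => rw [hEtaM]
  simp only [Functor.map_comp, Category.assoc]
end

section
/- Let R, S, T be monads on a category C, let λ : TS ⇒ ST and σ : SR ⇒ RS be weak distributive laws, and let τ : TR ⇒ RT be a distributive law, satisfying the Yang–Baxter equation σT ∘ Sτ ∘ λR = Rλ ∘ τS ∘ Tσ. Let κ^λ := Sμ^T ∘ λT ∘ η^T ST split as ι^λ ∘ π^λ with π^λ ∘ ι^λ = 1, giving the weak composite monad S •_λ T. Then ψ := Rπ^λ ∘ σT ∘ Sτ ∘ ι^λ R : (S•T)R ⇒ R(S•T) is a weak distributive law of R over S •_λ T. If, additionally, σ is a distributive law, then ψ is a distributive law. -/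
/-!
Write `φ := σT ∘ Sτ : STR ⇒ RST`. The axioms of `σ` and `τ` (and the Yang–Baxter equation for
`μ−`) make `φ` satisfy the law axioms with respect to the composite data
`(ST, η^S η^T, μ^S μ^T ∘ SλT)`, whether or not that data is a monad. Since `κ^λ` starts with
`η^T` and ends with `μ^T`, the Yang–Baxter equation together with (η−), (μ−) for `τ` gives
`φ ∘ κ^λ R = Rκ^λ ∘ φ`. A law commuting with an idempotent descends to the splitting:
`ψ = Rπ ∘ φ ∘ ιR` satisfies `ψ ∘ πR = Rπ ∘ φ` and `Rι ∘ ψ = φ ∘ ιR`, and these two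
intertwinings carry each axiom from `φ` over `ST` to `ψ` over `S •_λ T`.
-/

open CategoryTheory

universe v u

variable {C : Type u} [Category.{v} C]

section SecondComposite

variable {C : Type u} [Category.{v} C] (R S T : Monad C)

/-- The second composite law `ψ := Rπ^λ ∘ σT ∘ Sτ ∘ ι^λ R : (S•T)R ⇒ R(S•T)`. -/
def psiLaw (s : (R.toFunctor ⋙ S.toFunctor) ⟶ (S.toFunctor ⋙ R.toFunctor))
    (t : (R.toFunctor ⋙ T.toFunctor) ⟶ (T.toFunctor ⋙ R.toFunctor))
    (K : C ⥤ C) (p : (T.toFunctor ⋙ S.toFunctor) ⟶ K) (i : K ⟶ (T.toFunctor ⋙ S.toFunctor)) :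
    (R.toFunctor ⋙ K) ⟶ (K ⋙ R.toFunctor) :=
  Functor.whiskerLeft R.toFunctor i ≫ Functor.whiskerRight t S.toFunctor ≫
    Functor.whiskerLeft T.toFunctor s ≫ Functor.whiskerRight p R.toFunctor

lemma law_naturality {F G : C ⥤ C} (l : F ⋙ G ⟶ G ⋙ F) {X Y : C} (f : X ⟶ Y) :
    G.map (F.map f) ≫ l.app Y = l.app X ≫ F.map (G.map f) :=
  l.naturality f

def MonadData.retract (B : MonadData C) (K : C ⥤ C) (p : B.F ⟶ K) (i : K ⟶ B.F) :
    MonadData C where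
  F := K
  unit X := B.unit X ≫ p.app X
  mult X := i.app (K.obj X) ≫ B.F.map (i.app X) ≫ B.mult X ≫ p.app X

/- `wcompData A B l K p i` is `(compData A B l).retract K p i` up to reassociation. They are
compared through the axioms: rewriting one data into the other would change the type of the law. -/
lemma etaMinus_wcompData_iff (D A B : MonadData C) (l : A.F ⋙ B.F ⟶ B.F ⋙ A.F) (K : C ⥤ C)
    (p : B.F ⋙ A.F ⟶ K) (i : K ⟶ B.F ⋙ A.F) (ψ : D.F ⋙ K ⟶ K ⋙ D.F) :
    EtaMinus D (wcompData A B l K p i) ψ ↔ EtaMinus D ((compData A B l).retract K p i) ψ := by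
  simp only [EtaMinus, wcompData, compData, MonadData.retract, Functor.comp_map, Category.assoc]

lemma muMinus_wcompData_iff (D A B : MonadData C) (l : A.F ⋙ B.F ⟶ B.F ⋙ A.F) (K : C ⥤ C)
    (p : B.F ⋙ A.F ⟶ K) (i : K ⟶ B.F ⋙ A.F) (ψ : D.F ⋙ K ⟶ K ⋙ D.F) :
    MuMinus D (wcompData A B l K p i) ψ ↔ MuMinus D ((compData A B l).retract K p i) ψ := by
  simp only [MuMinus, wcompData, compData, MonadData.retract, Functor.comp_map, Category.assoc]

def retractLaw (G : C ⥤ C) {F K : C ⥤ C} (φ : G ⋙ F ⟶ F ⋙ G) (p : F ⟶ K) (i : K ⟶ F) :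
    G ⋙ K ⟶ K ⋙ G :=
  Functor.whiskerLeft G i ≫ φ ≫ Functor.whiskerRight p G

@[simp]
lemma retractLaw_app (G : C ⥤ C) {F K : C ⥤ C} (φ : G ⋙ F ⟶ F ⋙ G) (p : F ⟶ K)
    (i : K ⟶ F) (X : C) :
    (retractLaw G φ p i).app X = i.app (G.obj X) ≫ φ.app X ≫ G.map (p.app X) :=
  rfl

section Retract

variable {R} {B : MonadData C} {K : C ⥤ C} {p : B.F ⟶ K} {i : K ⟶ B.F}
  {φ : R.toFunctor ⋙ B.F ⟶ B.F ⋙ R.toFunctor}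

lemma retractLaw_app_comp_map (hret : ∀ X, i.app X ≫ p.app X = 𝟙 (K.obj X))
    (hφ : ∀ X, p.app (R.obj X) ≫ i.app (R.obj X) ≫ φ.app X = φ.app X ≫ R.map (p.app X ≫ i.app X))
    (X : C) :
    (retractLaw R.toFunctor φ p i).app X ≫ R.map (i.app X) = i.app (R.obj X) ≫ φ.app X := by
  rw [retractLaw_app, Category.assoc, Category.assoc, ← R.map_comp, ← hφ, reassoc_of% hret]

lemma app_comp_retractLaw_app (hret : ∀ X, i.app X ≫ p.app X = 𝟙 (K.obj X))
    (hφ : ∀ X, p.app (R.obj X) ≫ i.app (R.obj X) ≫ φ.app X = φ.app X ≫ R.map (p.app X ≫ i.app X))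
    (X : C) :
    p.app (R.obj X) ≫ (retractLaw R.toFunctor φ p i).app X = φ.app X ≫ R.map (p.app X) := by
  rw [retractLaw_app, reassoc_of% hφ, ← R.map_comp, Category.assoc, hret, Category.comp_id]

lemma EtaPlus.retract (hret : ∀ X, i.app X ≫ p.app X = 𝟙 (K.obj X)) (h : EtaPlus R.data B φ) :
    EtaPlus R.data (B.retract K p i) (retractLaw R.toFunctor φ p i) := by
  dsimp only [EtaPlus, Monad.data, MonadData.retract] at h ⊢
  intro X
  rw [retractLaw_app, i.naturality_assoc, reassoc_of% h X, ← R.unit_naturality, reassoc_of% hret]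

lemma MuPlus.retract (hret : ∀ X, i.app X ≫ p.app X = 𝟙 (K.obj X))
    (hφ : ∀ X, p.app (R.obj X) ≫ i.app (R.obj X) ≫ φ.app X = φ.app X ≫ R.map (p.app X ≫ i.app X))
    (h : MuPlus R.data B φ) :
    MuPlus R.data (B.retract K p i) (retractLaw R.toFunctor φ p i) := by
  dsimp only [MuPlus, Monad.data, MonadData.retract] at h ⊢
  intro X
  rw [retractLaw_app _ _ _ _ (R.obj X), Category.assoc, Category.assoc, ← R.map_comp_assoc,
    app_comp_retractLaw_app hret hφ, R.map_comp_assoc, R.mu_naturality, retractLaw_app,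
    i.naturality_assoc, reassoc_of% h X]

lemma EtaMinus.retract (hret : ∀ X, i.app X ≫ p.app X = 𝟙 (K.obj X))
    (hφ : ∀ X, p.app (R.obj X) ≫ i.app (R.obj X) ≫ φ.app X = φ.app X ≫ R.map (p.app X ≫ i.app X))
    (h : EtaMinus R.data B φ) :
    EtaMinus R.data (B.retract K p i) (retractLaw R.toFunctor φ p i) := by
  dsimp only [EtaMinus, Monad.data, MonadData.retract] at h ⊢
  intro X
  rw [Category.assoc, app_comp_retractLaw_app hret hφ, reassoc_of% h X, R.map_comp]

lemma MuMinus.retract (hret : ∀ X, i.app X ≫ p.app X = 𝟙 (K.obj X))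
    (hφ : ∀ X, p.app (R.obj X) ≫ i.app (R.obj X) ≫ φ.app X = φ.app X ≫ R.map (p.app X ≫ i.app X))
    (h : MuMinus R.data B φ) :
    MuMinus R.data (B.retract K p i) (retractLaw R.toFunctor φ p i) := by
  dsimp only [MuMinus, Monad.data, MonadData.retract] at h ⊢
  intro X
  simp only [Category.assoc, R.map_comp]
  rw [app_comp_retractLaw_app hret hφ, reassoc_of% h X,
    reassoc_of% retractLaw_app_comp_map hret hφ (K.obj X)]
  dsimp only [Functor.comp_obj]
  rw [i.naturality_assoc, ← reassoc_of% law_naturality φ, ← B.F.map_comp_assoc,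
    ← retractLaw_app_comp_map hret hφ, B.F.map_comp_assoc]

end Retract

def compLaw {R S T : C ⥤ C} (s : R ⋙ S ⟶ S ⋙ R) (t : R ⋙ T ⟶ T ⋙ R) :
    R ⋙ T ⋙ S ⟶ (T ⋙ S) ⋙ R :=
  Functor.whiskerRight t S ≫ Functor.whiskerLeft T s

@[simp]
lemma compLaw_app {R S T : C ⥤ C} (s : R ⋙ S ⟶ S ⋙ R) (t : R ⋙ T ⟶ T ⋙ R) (X : C) :
    (compLaw s t).app X = S.map (t.app X) ≫ s.app (T.obj X) :=
  rfl

lemma psiLaw_eq_retractLaw (s : R.toFunctor ⋙ S.toFunctor ⟶ S.toFunctor ⋙ R.toFunctor)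
    (t : R.toFunctor ⋙ T.toFunctor ⟶ T.toFunctor ⋙ R.toFunctor) (K : C ⥤ C)
    (p : T.toFunctor ⋙ S.toFunctor ⟶ K) (i : K ⟶ T.toFunctor ⋙ S.toFunctor) :
    psiLaw R S T s t K p i = retractLaw R.toFunctor (compLaw s t) p i := by
  ext X
  simp [psiLaw]

section CompLaw

variable {R S T} {l : S.toFunctor ⋙ T.toFunctor ⟶ T.toFunctor ⋙ S.toFunctor}
  {s : R.toFunctor ⋙ S.toFunctor ⟶ S.toFunctor ⋙ R.toFunctor}
  {t : R.toFunctor ⋙ T.toFunctor ⟶ T.toFunctor ⋙ R.toFunctor}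

lemma EtaPlus.comp (hs : EtaPlus R.data S.data s) (ht : EtaPlus R.data T.data t) :
    EtaPlus R.data (compData S.data T.data l) (compLaw s t) := by
  dsimp only [EtaPlus, Monad.data, compData, Functor.comp_map, Functor.comp_obj] at hs ht ⊢
  intro X
  rw [compLaw_app, ← S.map_comp_assoc, ht, hs]

lemma MuPlus.comp (hs : MuPlus R.data S.data s) (ht : MuPlus R.data T.data t) :
    MuPlus R.data (compData S.data T.data l) (compLaw s t) := by
  dsimp only [MuPlus, Monad.data, compData, Functor.comp_map, Functor.comp_obj] at hs ht ⊢
  intro X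
  simp only [compLaw_app, Category.assoc, R.map_comp]
  rw [← S.map_comp_assoc, ht X, S.map_comp_assoc, S.map_comp_assoc, hs (T.obj X),
    reassoc_of% law_naturality s]

lemma EtaMinus.comp (hs : EtaMinus R.data S.data s) (ht : EtaMinus R.data T.data t) :
    EtaMinus R.data (compData S.data T.data l) (compLaw s t) := by
  dsimp only [EtaMinus, Monad.data, compData] at hs ht ⊢
  intro X
  rw [compLaw_app, Category.assoc, ← S.unit_naturality_assoc]
  dsimp only [Functor.comp_obj]
  rw [reassoc_of% ht X, hs, R.map_comp]

lemma MuMinus.comp (hs : MuMinus R.data S.data s) (ht : MuMinus R.data T.data t)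
    (yb : YangBaxter R.data S.data T.data l s t) :
    MuMinus R.data (compData S.data T.data l) (compLaw s t) := by
  dsimp only [MuMinus, YangBaxter, Monad.data, compData, Functor.comp_map, Functor.comp_obj]
    at hs ht yb ⊢
  intro X
  have htS := S.congr_map (S.congr_map (ht X))
  have hsS := S.congr_map (law_naturality s (T.μ.app X))
  have hlS := S.congr_map (law_naturality l (t.app X))
  have ybS := S.congr_map (yb (T.obj X))
  simp only [Functor.map_comp, Functor.comp_obj] at htS hsS hlS ybS
  simp only [compLaw_app, Functor.map_comp, Category.assoc]
  rw [← S.mu_naturality_assoc]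
  dsimp only [Functor.comp_obj]
  rw [hs (T.obj X), reassoc_of% htS, reassoc_of% hsS, ← reassoc_of% hlS, reassoc_of% ybS,
    reassoc_of% law_naturality s, reassoc_of% law_naturality s]

lemma lawKappa_comp_compLaw_app (hte : EtaMinus R.data T.data t) (htm : MuMinus R.data T.data t)
    (yb : YangBaxter R.data S.data T.data l s t) (X : C) :
    lawKappa S.data T.data l (R.obj X) ≫ (compLaw s t).app X =
      (compLaw s t).app X ≫ R.map (lawKappa S.data T.data l X) := by
  dsimp only [MuMinus, EtaMinus, YangBaxter, Monad.data, lawKappa] at hte htm yb ⊢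
  simp only [compLaw_app, Functor.map_comp, Category.assoc]
  rw [← S.map_comp_assoc, htm X]
  simp only [Functor.map_comp, Category.assoc]
  rw [law_naturality s, ← reassoc_of% law_naturality l]
  dsimp only [Functor.comp_obj]
  rw [reassoc_of% yb (T.obj X), ← T.unit_naturality_assoc, ← T.unit_naturality_assoc,
    reassoc_of% hte]

end CompLaw

theorem second_composite_law
    (l : (S.toFunctor ⋙ T.toFunctor) ⟶ (T.toFunctor ⋙ S.toFunctor))
    (s : (R.toFunctor ⋙ S.toFunctor) ⟶ (S.toFunctor ⋙ R.toFunctor))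
    (t : (R.toFunctor ⋙ T.toFunctor) ⟶ (T.toFunctor ⋙ R.toFunctor))
    (hs : IsWDL R.data S.data s) (ht : IsDL R.data T.data t)
    (yb : YangBaxter R.data S.data T.data l s t)
    (K : C ⥤ C) (p : (T.toFunctor ⋙ S.toFunctor) ⟶ K) (i : K ⟶ (T.toFunctor ⋙ S.toFunctor))
    (hsplit : ∀ X : C, p.app X ≫ i.app X = lawKappa S.data T.data l X)
    (hretract : ∀ X : C, i.app X ≫ p.app X = 𝟙 (K.obj X)) :
    IsWDL R.data (wcompData S.data T.data l K p i) (psiLaw R S T s t K p i) ∧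
    (EtaMinus R.data S.data s →
      IsDL R.data (wcompData S.data T.data l K p i) (psiLaw R S T s t K p i)) := by
  obtain ⟨hsηp, hsμp, hsμm⟩ := hs
  obtain ⟨htηp, htμp, htηm, htμm⟩ := ht
  have hκ : ∀ X, p.app (R.obj X) ≫ i.app (R.obj X) ≫ (compLaw s t).app X =
      (compLaw s t).app X ≫ R.map (p.app X ≫ i.app X) := fun X => by
    rw [reassoc_of% hsplit, hsplit]
    exact lawKappa_comp_compLaw_app htηm htμm yb X
  rw [psiLaw_eq_retractLaw]
  have wdl : IsWDL R.data (wcompData S.data T.data l K p i)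
      (retractLaw R.toFunctor (compLaw s t) p i) :=
    -- (η+) and (μ+) only involve the functor `K` of the weak composite, so they need no conversion.
    ⟨(hsηp.comp (l := l) htηp).retract hretract, (hsμp.comp (l := l) htμp).retract hretract hκ,
      (muMinus_wcompData_iff ..).2 ((hsμm.comp htμm yb).retract hretract hκ)⟩
  exact ⟨wdl, fun hsηm => ⟨wdl.1, wdl.2.1,
    (etaMinus_wcompData_iff ..).2 ((hsηm.comp htηm).retract hretract hκ), wdl.2.2⟩⟩

end SecondComposite
end

section
/- Let R, S, T be monads on a category C, let λ : TS ⇒ ST and σ : SR ⇒ RS be weak distributive laws with split idempotents κ^λ = ι^λ ∘ π^λ and κ^σ = ι^σ ∘ π^σ (π ∘ ι = 1 in each case), and let τ : TR ⇒ RT be a distributive law, satisfying the Yang–Baxter equation σT ∘ Sτ ∘ λR = Rλ ∘ τS ∘ Tσ. Let φ := π^σ T ∘ Rλ ∘ τS ∘ Tι^σ and ψ := Rπ^λ ∘ σT ∘ Sτ ∘ ι^λ R be the resulting composite weak distributive laws, with associated idempotents κ^φ := (R•S)μ^T ∘ φT ∘ η^T (R•S)T and κ^ψ := Rμ^{S•T}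 ∘ ψ(S•T) ∘ η^{S•T} R(S•T), where μ^{S•T} and η^{S•T} are the multiplication and unit of S •_λ T. Setting α := π^σ T ∘ Rι^λ : R(S•T) ⇒ (R•S)T and β := Rπ^λ ∘ ι^σ T : (R•S)T ⇒ R(S•T), one has κ^φ = π^σ T ∘ Rκ^λ ∘ ι^σ T = α ∘ β and κ^ψ = Rπ^λ ∘ κ^σ T ∘ Rι^λ = β ∘ α. -/
open CategoryTheory

universe v u

variable {C : Type u} [Category.{v} C]

section Idempotents

variable {C : Type u} [Category.{v} C] (R S T : Monad C)

/-- The first composite law `φ := π^σ T ∘ Rλ ∘ τS ∘ Tι^σ : T(R•S) ⇒ (R•S)T`. -/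
def phiLaw (l : (S.toFunctor ⋙ T.toFunctor) ⟶ (T.toFunctor ⋙ S.toFunctor))
    (t : (R.toFunctor ⋙ T.toFunctor) ⟶ (T.toFunctor ⋙ R.toFunctor))
    (K : C ⥤ C) (p : (S.toFunctor ⋙ R.toFunctor) ⟶ K) (i : K ⟶ (S.toFunctor ⋙ R.toFunctor)) :
    (K ⋙ T.toFunctor) ⟶ (T.toFunctor ⋙ K) :=
  Functor.whiskerRight i T.toFunctor ≫ Functor.whiskerLeft S.toFunctor t ≫
    Functor.whiskerRight l R.toFunctor ≫ Functor.whiskerLeft T.toFunctor p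

/-- In the situation of the iteration theorem, the idempotents of
the two composite laws are `κ^φ = π^σ T ∘ Rκ^λ ∘ ι^σ T = α ∘ β` and
`κ^ψ = Rπ^λ ∘ κ^σ T ∘ Rι^λ = β ∘ α`, where `α := π^σ T ∘ Rι^λ` and
`β := Rπ^λ ∘ ι^σ T`. -/
theorem kappa_phi_psi
    (l : (S.toFunctor ⋙ T.toFunctor) ⟶ (T.toFunctor ⋙ S.toFunctor))
    (s : (R.toFunctor ⋙ S.toFunctor) ⟶ (S.toFunctor ⋙ R.toFunctor))
    (t : (R.toFunctor ⋙ T.toFunctor) ⟶ (T.toFunctor ⋙ R.toFunctor))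
    (hl : IsWDL S.data T.data l) (hs : IsWDL R.data S.data s) (ht : IsDL R.data T.data t)
    (yb : YangBaxter R.data S.data T.data l s t)
    (Kl : C ⥤ C) (pl : (T.toFunctor ⋙ S.toFunctor) ⟶ Kl) (il : Kl ⟶ (T.toFunctor ⋙ S.toFunctor))
    (hsplitl : ∀ X : C, pl.app X ≫ il.app X = lawKappa S.data T.data l X)
    (hretractl : ∀ X : C, il.app X ≫ pl.app X = 𝟙 (Kl.obj X))
    (Ks : C ⥤ C) (ps : (S.toFunctor ⋙ R.toFunctor) ⟶ Ks) (is : Ks ⟶ (S.toFunctor ⋙ R.toFunctor))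
    (hsplits : ∀ X : C, ps.app X ≫ is.app X = lawKappa R.data S.data s X)
    (hretracts : ∀ X : C, is.app X ≫ ps.app X = 𝟙 (Ks.obj X)) :
    (∀ X : C, lawKappa (wcompData R.data S.data s Ks ps is) T.data (phiLaw R S T l t Ks ps is) X =
      is.app (T.obj X) ≫ R.map (lawKappa S.data T.data l X) ≫ ps.app (T.obj X)) ∧
    (∀ X : C, lawKappa (wcompData R.data S.data s Ks ps is) T.data (phiLaw R S T l t Ks ps is) X =
      (is.app (T.obj X) ≫ R.map (pl.app X)) ≫ (R.map (il.app X) ≫ ps.app (T.obj X))) ∧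
    (∀ X : C,
      lawKappa R.data (wcompData S.data T.data l Kl pl il) (psiLaw R S T s t Kl pl il) X =
      R.map (il.app X) ≫ lawKappa R.data S.data s (T.obj X) ≫ R.map (pl.app X)) ∧
    (∀ X : C,
      lawKappa R.data (wcompData S.data T.data l Kl pl il) (psiLaw R S T s t Kl pl il) X =
      (R.map (il.app X) ≫ ps.app (T.obj X)) ≫ (is.app (T.obj X) ≫ R.map (pl.app X))) := by
  -- naturality helpers
  have natηT : ∀ {Y Z : C} (f : Y ⟶ Z), f ≫ T.η.app Z = T.η.app Y ≫ T.map f := by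
    intro Y Z f; simpa using T.η.naturality f
  have natηS : ∀ {Y Z : C} (f : Y ⟶ Z), f ≫ S.η.app Z = S.η.app Y ≫ S.map f := by
    intro Y Z f; simpa using S.η.naturality f
  have natμS : ∀ {Y Z : C} (f : Y ⟶ Z),
      S.map (S.map f) ≫ S.μ.app Z = S.μ.app Y ≫ S.map f := by
    intro Y Z f; simpa using S.μ.naturality f
  have natl : ∀ {Y Z : C} (f : Y ⟶ Z),
      T.map (S.map f) ≫ l.app Z = l.app Y ≫ S.map (T.map f) := by
    intro Y Z f; simpa using l.naturality f
  have nats : ∀ {Y Z : C} (f : Y ⟶ Z),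
      S.map (R.map f) ≫ s.app Z = s.app Y ≫ R.map (S.map f) := by
    intro Y Z f; simpa using s.naturality f
  have natps : ∀ {Y Z : C} (f : Y ⟶ Z),
      R.map (S.map f) ≫ ps.app Z = ps.app Y ≫ Ks.map f := by
    intro Y Z f; simpa using ps.naturality f
  -- law axioms, cleaned up
  have lEtaP : ∀ Z : C, T.map (S.η.app Z) ≫ l.app Z = S.η.app (T.obj Z) := hl.1
  have lMuP : ∀ Z : C, T.map (S.μ.app Z) ≫ l.app Z =
      l.app (S.obj Z) ≫ S.map (l.app Z) ≫ S.μ.app (T.obj Z) := hl.2.1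
  have tEtaM : ∀ Z : C, T.η.app (R.obj Z) ≫ t.app Z = R.map (T.η.app Z) := ht.2.2.1
  -- κ^λ expanded form of the splitting
  have hsplitl' : ∀ Z : C, pl.app Z ≫ il.app Z =
      T.η.app (S.obj (T.obj Z)) ≫ l.app (T.obj Z) ≫ S.map (T.μ.app Z) := by
    intro Z; simpa [lawKappa, Monad.data] using hsplitl Z
  have hsplits' : ∀ Z : C, ps.app Z ≫ is.app Z =
      S.η.app (R.obj (S.obj Z)) ≫ s.app (S.obj Z) ≫ R.map (S.μ.app Z) := by
    intro Z; simpa [lawKappa, Monad.data] using hsplits Z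
  -- κ^λ absorbed by the projection
  have hkpl : ∀ Z : C, T.η.app (S.obj (T.obj Z)) ≫ l.app (T.obj Z) ≫
      S.map (T.μ.app Z) ≫ pl.app Z = pl.app Z := by
    intro Z
    have h : (pl.app Z ≫ il.app Z) ≫ pl.app Z = pl.app Z := by
      rw [Category.assoc, hretractl, Category.comp_id]
    rw [hsplitl'] at h
    simpa [Category.assoc] using h
  -- Part 1: κ^φ = ι^σ T ≫ Rκ^λ ≫ π^σ T
  have part1 : ∀ X : C,
      lawKappa (wcompData R.data S.data s Ks ps is) T.data (phiLaw R S T l t Ks ps is) X =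
      is.app (T.obj X) ≫ R.map (lawKappa S.data T.data l X) ≫ ps.app (T.obj X) := by
    intro X
    simp only [lawKappa, wcompData, phiLaw, Monad.data, NatTrans.comp_app, Functor.whiskerLeft_app,
      Functor.whiskerRight_app, Functor.comp_obj, Functor.comp_map, Functor.map_comp, Category.assoc]
    slice_lhs 1 2 => rw [← natηT]
    slice_lhs 2 3 => rw [tEtaM]
    slice_lhs 4 5 => rw [← natps]
  -- the key S,T-level computation for κ^ψ
  have hA : ∀ X : C,
      S.map (T.η.app (Kl.obj X)) ≫ pl.app (Kl.obj X) ≫ il.app (Kl.obj X) ≫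
        S.map (T.map (il.app X)) ≫ S.map (l.app (T.obj X)) ≫ S.map (S.map (T.μ.app X)) ≫
        S.μ.app (T.obj X) ≫ pl.app X =
      S.map (il.app X) ≫ S.μ.app (T.obj X) ≫ pl.app X := by
    intro X
    slice_lhs 2 3 => rw [hsplitl']
    simp only [Category.assoc]
    slice_lhs 1 2 => rw [natηT]
    slice_lhs 2 3 => rw [natl]
    slice_lhs 3 4 => rw [← Functor.map_comp, Monad.right_unit]
    simp only [CategoryTheory.Functor.map_id, Functor.comp_obj, Functor.id_obj, Functor.id_map,
      Category.id_comp, Category.comp_id, Category.assoc]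
    slice_lhs 2 3 => rw [← natl]
    slice_lhs 1 2 => rw [← natηT]
    slice_lhs 5 6 => rw [natμS]
    slice_lhs 3 5 => rw [← lMuP]
    slice_lhs 2 3 => rw [← natηT]
    simp only [Category.assoc]
    slice_lhs 3 6 => rw [hkpl]
  -- Part 3: κ^ψ = Rι^λ ≫ κ^σ T ≫ Rπ^λ
  have part3 : ∀ X : C,
      lawKappa R.data (wcompData S.data T.data l Kl pl il) (psiLaw R S T s t Kl pl il) X =
      R.map (il.app X) ≫ lawKappa R.data S.data s (T.obj X) ≫ R.map (pl.app X) := by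
    intro X
    simp only [lawKappa, wcompData, psiLaw, Monad.data, NatTrans.comp_app, Functor.whiskerLeft_app,
      Functor.whiskerRight_app, Functor.comp_obj, Functor.comp_map, Functor.map_comp, Category.assoc]
    slice_lhs 3 4 => rw [hsplitl']
    simp only [Category.assoc]
    slice_lhs 2 3 => rw [natηT]
    slice_lhs 3 4 => rw [lEtaP]
    slice_lhs 3 4 => rw [← natηS]
    slice_lhs 2 3 => rw [Monad.left_unit]
    simp only [Functor.id_obj, Functor.id_map, Category.id_comp, Category.comp_id, Category.assoc]
    slice_lhs 2 3 => rw [← natηS]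
    slice_lhs 1 2 => rw [tEtaM]
    slice_lhs 1 2 => rw [natηS]
    slice_lhs 2 3 => rw [nats]
    slice_lhs 3 10 => simp only [← Functor.map_comp]
    rw [hA]
    simp only [Functor.map_comp, Category.assoc]
    slice_lhs 2 3 => rw [← nats]
    slice_lhs 1 2 => rw [← natηS]
    simp [Category.assoc]
  refine ⟨part1, fun X => ?_, part3, fun X => ?_⟩
  · rw [part1 X, ← hsplitl X]
    have e : is.app (T.obj X) ≫ R.map (pl.app X ≫ il.app X) ≫ ps.app (T.obj X) =
        (is.app (T.obj X) ≫ R.map (pl.app X)) ≫ R.map (il.app X) ≫ ps.app (T.obj X) := by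
      simp [Category.assoc]
    exact e
  · rw [part3 X, ← hsplits (T.obj X)]
    have e : R.map (il.app X) ≫ (ps.app (T.obj X) ≫ is.app (T.obj X)) ≫ R.map (pl.app X) =
        (R.map (il.app X) ≫ ps.app (T.obj X)) ≫ is.app (T.obj X) ≫ R.map (pl.app X) := by
      simp only [Category.assoc]
    exact e

end Idempotents
end

section
/- Let R, S, T be monads on a category C, let τ : TR ⇒ RT be a weak distributive law, let σ : SR ⇒ RS be a distributive law, and let γ : S ⇒ T be a monad morphism such that Rγ ∘ σ = τ ∘ γR. Define the trivial weak distributive law λ := η^S μ^T ∘ Tγ : TS ⇒ ST. Then the Yang–Baxter equation σT ∘ Sτ ∘ λR = Rλ ∘ τS ∘ Tσ holds. -/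
open CategoryTheory

universe v u

variable {C : Type u} [Category.{v} C]

/-
Both sides of the Yang–Baxter equation reduce to `R(η^S T ∘ μ^T) ∘ τT ∘ T(-)` applied to the two
sides of the compatibility `Rγ ∘ σ = τ ∘ γR`. On the left, `η^S` slides past `Sτ` by naturality and
is absorbed by `σ` through (η−), after which (μ−) for `τ` moves `μ^T` past `τ`; on the right,
naturality of `τ` moves `RTγ` in front of `τT`.
-/

section

variable {R S T : Monad C}

@[simp]
lemma trivLaw_app (γ : S.toFunctor ⟶ T.toFunctor) (X : C) :
    (trivLaw S T γ).app X = T.map (γ.app X) ≫ T.μ.app X ≫ S.η.app (T.obj X) := rfl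

lemma EtaMinus.unit_comp_map_comp
    {s : (R.toFunctor ⋙ S.toFunctor) ⟶ (S.toFunctor ⋙ R.toFunctor)} (hs : EtaMinus R.data S.data s) {Y Z : C} (f : Y ⟶ R.obj Z) :
    S.η.app Y ≫ S.map f ≫ s.app Z = f ≫ R.map (S.η.app Z) := by
  rw [← S.η.naturality_assoc]
  exact congrArg (f ≫ ·) (hs Z)

lemma trivLaw_app_comp_map_comp_app
    {s : (R.toFunctor ⋙ S.toFunctor) ⟶ (S.toFunctor ⋙ R.toFunctor)}
    {t : (R.toFunctor ⋙ T.toFunctor) ⟶ (T.toFunctor ⋙ R.toFunctor)}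
    (hs : EtaMinus R.data S.data s) (ht : MuMinus R.data T.data t)
    (γ : S.toFunctor ⟶ T.toFunctor) (X : C) :
    (trivLaw S T γ).app (R.obj X) ≫ S.map (t.app X) ≫ s.app (T.obj X) =
      T.map (γ.app (R.obj X) ≫ t.app X) ≫ t.app (T.obj X) ≫
        R.map (T.μ.app X ≫ S.η.app (T.obj X)) := by
  have hμ : T.μ.app (R.obj X) ≫ t.app X =
      T.map (t.app X) ≫ t.app (T.obj X) ≫ R.map (T.μ.app X) := ht X
  simp only [trivLaw_app, Category.assoc, hs.unit_comp_map_comp, reassoc_of% hμ,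
    Functor.map_comp]

lemma map_app_comp_app_comp_map_trivLaw_app
    (s : (R.toFunctor ⋙ S.toFunctor) ⟶ (S.toFunctor ⋙ R.toFunctor))
    (t : (R.toFunctor ⋙ T.toFunctor) ⟶ (T.toFunctor ⋙ R.toFunctor))
    (γ : S.toFunctor ⟶ T.toFunctor) (X : C) :
    T.map (s.app X) ≫ t.app (S.obj X) ≫ R.map ((trivLaw S T γ).app X) =
      T.map (s.app X ≫ R.map (γ.app X)) ≫ t.app (T.obj X) ≫
        R.map (T.μ.app X ≫ S.η.app (T.obj X)) := by
  have hnat : t.app (S.obj X) ≫ R.map (T.map (γ.app X)) =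
      T.map (R.map (γ.app X)) ≫ t.app (T.obj X) := (t.naturality (γ.app X)).symm
  simp only [trivLaw_app, Functor.map_comp, Category.assoc, reassoc_of% hnat]

end

theorem yb_trivial_lambda_general {C : Type u} [Category.{v} C] (R S T : Monad C)
    (s : (R.toFunctor ⋙ S.toFunctor) ⟶ (S.toFunctor ⋙ R.toFunctor))
    (t : (R.toFunctor ⋙ T.toFunctor) ⟶ (T.toFunctor ⋙ R.toFunctor))
    (γ : S.toFunctor ⟶ T.toFunctor)
    (ht : IsWDL R.data T.data t) (hs : IsDL R.data S.data s)
    (hcompat : ∀ X : C, s.app X ≫ R.map (γ.app X) = γ.app (R.obj X) ≫ t.app X) :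
    YangBaxter R.data S.data T.data (trivLaw S T γ) s t := by
  obtain ⟨-, -, hση, -⟩ := hs
  obtain ⟨-, -, hτμ⟩ := ht
  intro X
  change (trivLaw S T γ).app (R.obj X) ≫ S.map (t.app X) ≫ s.app (T.obj X) =
    T.map (s.app X) ≫ t.app (S.obj X) ≫ R.map ((trivLaw S T γ).app X)
  rw [trivLaw_app_comp_map_comp_app hση hτμ, map_app_comp_app_comp_map_trivLaw_app,
    hcompat]

/-- first half of Proposition 4.6. Let `τ : TR ⇒ RT` be a weak
distributive law, `σ : SR ⇒ RS` a distributive law, and `γ : S ⇒ T` a monad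
morphism with `Rγ ∘ σ = τ ∘ γR`. Then the trivial weak distributive law
`λ := η^S μ^T ∘ Tγ` satisfies the Yang–Baxter equation with `σ` and `τ`. -/
theorem yb_trivial_lambda {C : Type u} [Category.{v} C] (R S T : Monad C)
    (s : (R.toFunctor ⋙ S.toFunctor) ⟶ (S.toFunctor ⋙ R.toFunctor))
    (t : (R.toFunctor ⋙ T.toFunctor) ⟶ (T.toFunctor ⋙ R.toFunctor))
    (γ : S.toFunctor ⟶ T.toFunctor)
    (ht : IsWDL R.data T.data t) (hs : IsDL R.data S.data s)
    (hγη : ∀ X : C, S.η.app X ≫ γ.app X = T.η.app X)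
    (hγμ : ∀ X : C, S.μ.app X ≫ γ.app X = γ.app (S.obj X) ≫ T.map (γ.app X) ≫ T.μ.app X)
    (hcompat : ∀ X : C, s.app X ≫ R.map (γ.app X) = γ.app (R.obj X) ≫ t.app X) :
    YangBaxter R.data S.data T.data (trivLaw S T γ) s t :=
  yb_trivial_lambda_general R S T s t γ ht hs hcompat
end

section
/- Let S and T be monads on the category of sets and let λ : TS ⇒ ST be a natural transformation satisfying either axiom (η+): λ ∘ Tη^S = η^S T, or axiom (η−): λ ∘ η^T S = Sη^T. Let E be the exception monad and, for any Set monad U, let ε^U : EU ⇒ UE be the distributive law determined by ε^U_X(inl(u)) = U(inl_X)(u) for u ∈ UX and ε^U_X(inr(∗)) = η^U_{X+1}(inr_X(∗)). Then the Yang–Baxter equation λE ∘ Tε^S ∘ ε^T S = Sε^T ∘ ε^S T ∘ Eλ holds. -/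
/-!
On `inl` both sides of the Yang–Baxter equation reduce to `λ_{X+1} ∘ TS(inl) = ST(inl) ∘ λ_X`,
which is naturality of `λ`. On `inr ∗` the two sides are `λ (η^T (η^S ∗))` and `η^S (η^T ∗)`;
either unit axiom, combined with naturality of the other monad's unit, makes `λ` carry the unit
of `TS` to the unit of `ST`.
-/

open CategoryTheory

universe u

/-- The distributive law `ε^U : EU ⇒ UE` of a `Set`-monad `U` over the exception
monad `E` (with `EX = X + 1` rendered as `Option X`): `inl u ↦ U(inl)(u)` and
`inr ∗ ↦ η^U(inr ∗)`. -/
def epsLaw (U : Monad (Type u)) (X : Type u) : Option (U.obj X) → U.obj (Option X) :=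
  fun z => z.elim (U.η.app (Option X) none) (fun u => U.map (TypeCat.ofHom fun x : X => some x) u)

namespace CategoryTheory.Monad

variable {C : Type*} [Category C] {S T : Monad C}
  {l : S.toFunctor ⋙ T.toFunctor ⟶ T.toFunctor ⋙ S.toFunctor}

theorem unit_comp_unit_comp_app_of_map_unit_comp
    (h : ∀ X, T.map (S.η.app X) ≫ l.app X = S.η.app (T.obj X)) (X : C) :
    S.η.app X ≫ T.η.app (S.obj X) ≫ l.app X = T.η.app X ≫ S.η.app (T.obj X) := by
  rw [← h, ← Category.assoc, ← Category.assoc]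
  congr 1
  exact T.η.naturality (S.η.app X)

theorem unit_comp_unit_comp_app_of_unit_comp
    (h : ∀ X, T.η.app (S.obj X) ≫ l.app X = S.map (T.η.app X)) (X : C) :
    S.η.app X ≫ T.η.app (S.obj X) ≫ l.app X = T.η.app X ≫ S.η.app (T.obj X) := by
  rw [h]
  exact (S.η.naturality (T.η.app X)).symm

end CategoryTheory.Monad

section epsLaw

variable (U V : Monad (Type u)) {X : Type u}

theorem map_epsLaw_unit_none :
    V.map (TypeCat.ofHom (epsLaw U X)) (V.η.app _ none) = V.η.app _ (U.η.app (Option X) none) :=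
  (types_congr_hom (V.η.naturality (TypeCat.ofHom (epsLaw U X))) none).symm

theorem map_epsLaw_map_some (v : V.obj (U.obj X)) :
    V.map (TypeCat.ofHom (epsLaw U X)) (V.map (TypeCat.ofHom some) v) =
      V.map (U.map (TypeCat.ofHom some)) v :=
  (V.map_comp_apply _ _ v).symm

end epsLaw

/-- Proposition 4.8. If `λ : TS ⇒ ST` satisfies axiom (η+) or
axiom (η−), then the Yang–Baxter equation
`λE ∘ Tε^S ∘ ε^T S = Sε^T ∘ ε^S T ∘ Eλ` holds. -/
theorem yb_exception (S T : Monad (Type u))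
    (l : (S.toFunctor ⋙ T.toFunctor) ⟶ (T.toFunctor ⋙ S.toFunctor))
    (h : (∀ X : Type u, T.map (S.η.app X) ≫ l.app X = S.η.app (T.obj X)) ∨
         (∀ X : Type u, T.η.app (S.obj X) ≫ l.app X = S.map (T.η.app X))) :
    ∀ X : Type u,
      TypeCat.ofHom (epsLaw T (S.obj X)) ≫ T.map (TypeCat.ofHom (epsLaw S X)) ≫ l.app (Option X) =
      TypeCat.ofHom (Option.map (l.app X) :
          Option (T.obj (S.obj X)) → Option (S.obj (T.obj X))) ≫
        TypeCat.ofHom (epsLaw S (T.obj X)) ≫ S.map (TypeCat.ofHom (epsLaw T X)) := by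
  intro X
  ext (_ | u)
  · have hunit := h.elim Monad.unit_comp_unit_comp_app_of_map_unit_comp
      Monad.unit_comp_unit_comp_app_of_unit_comp (Option X)
    change l.app _ (T.map _ (T.η.app _ none)) = S.map _ (S.η.app _ none)
    rw [map_epsLaw_unit_none, map_epsLaw_unit_none]
    exact types_congr_hom hunit none
  · change l.app _ (T.map _ (T.map _ u)) = S.map _ (S.map _ (l.app X u))
    rw [map_epsLaw_map_some, map_epsLaw_map_some]
    exact NatTrans.naturality_apply l _ u
end

section
/- Let A be a fixed set and R the reader monad on Set, RX := X^A. For any Set monad U, let ρ^U : UR ⇒ RU be the distributive law defined by ρ^U_X(z)(a) := U(â_X)(z) for z ∈ U(X^A) and a ∈ A, where â_X : X^A → X is evaluation at a, â_X(h) = h(a). Then for any monads S, T on Set and ANY natural transformation λ : TS ⇒ ST, the Yang–Baxter equation ρ^S T ∘ Sρ^T ∘ λR = Rλ ∘ ρ^T S ∘ Tρ^S holds. -/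
/-!
Evaluated at `a : A`, both sides of the Yang–Baxter equation reduce to the two sides of the
naturality square of `λ` at the evaluation map `â : X^A → X`, because `â ∘ ρ^U = U â`.
-/

open CategoryTheory

universe u

/-- The distributive law `ρ^U : UR ⇒ RU` of a `Set`-monad `U` over the reader
monad `R` (with `RX = X^A`): `ρ^U_X(z)(a) = U(â)(z)`, where `â` is evaluation
at `a`. -/
def rhoLaw (A : Type u) (U : Monad (Type u)) (X : Type u) :
    U.obj (A → X) → (A → U.obj X) :=
  fun z a => U.map (TypeCat.ofHom (fun h : A → X => h a)) z

theorem rhoLaw_map_rhoLaw_apply {A X : Type u} (U V : Monad (Type u))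
    (z : U.obj (V.obj (A → X))) (a : A) :
    rhoLaw A U (V.obj X) (U.map (TypeCat.ofHom (rhoLaw A V X)) z) a =
      U.map (V.map (TypeCat.ofHom fun h : A → X => h a)) z := by
  simp only [rhoLaw, ← Functor.map_comp_apply]
  rfl

/-- Proposition 4.10. For any monads `S`, `T` on `Set` and any
natural transformation `λ : TS ⇒ ST`, the Yang–Baxter equation
`ρ^S T ∘ Sρ^T ∘ λR = Rλ ∘ ρ^T S ∘ Tρ^S` holds. -/
theorem yb_reader (A : Type u) (S T : Monad (Type u))
    (l : (S.toFunctor ⋙ T.toFunctor) ⟶ (T.toFunctor ⋙ S.toFunctor)) :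
    ∀ X : Type u,
      l.app (A → X) ≫ S.map (TypeCat.ofHom (rhoLaw A T X)) ≫ TypeCat.ofHom (rhoLaw A S (T.obj X)) =
      T.map (TypeCat.ofHom (rhoLaw A S X)) ≫ TypeCat.ofHom (rhoLaw A T (S.obj X)) ≫
        TypeCat.ofHom (fun (h : A → T.obj (S.obj X)) (a : A) => l.app X (h a)) := by
  intro X
  ext z a
  change rhoLaw A S (T.obj X) (S.map (TypeCat.ofHom (rhoLaw A T X)) (l.app _ z)) a =
    l.app X (rhoLaw A T (S.obj X) (T.map (TypeCat.ofHom (rhoLaw A S X)) z) a)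
  rw [rhoLaw_map_rhoLaw_apply, rhoLaw_map_rhoLaw_apply]
  exact (NatTrans.naturality_apply l (TypeCat.ofHom fun h : A → X => h a) z).symm
end

section
/- Let (M, ·, e) be a monoid and W the writer monad on Set, WX := M × X. For any Set monad U, let ω^U : WU ⇒ UW be the distributive law defined by ω^U_X(m, u) := U(x ↦ (m,x))(u) for (m,u) ∈ M × UX. Then for any monads S, T on Set and ANY natural transformation λ : TS ⇒ ST, the Yang–Baxter equation λW ∘ Tω^S ∘ ω^T S = Sω^T ∘ ω^S T ∘ Wλ holds. -/
/-! On the fibre `{m} × UX`, the law `ω^U` is `U` applied to `x ↦ (m, x)`, and the composite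
`Tω^S ∘ ω^T S` is `TS` applied to the same map. Both sides of the Yang–Baxter equation are
therefore the two paths of the naturality square of `λ` at `x ↦ (m, x)`. -/

open CategoryTheory

universe u

/-- The distributive law `ω^U : WU ⇒ UW` of the writer monad `W` (with
`WX = M × X` for a monoid `M`) over a `Set`-monad `U`:
`ω^U_X(m, u) = U(x ↦ (m, x))(u)`. -/
def omegaLaw (M : Type u) (U : Monad (Type u)) (X : Type u) :
    M × U.obj X → U.obj (M × X) :=
  fun p => U.map (TypeCat.ofHom (fun x : X => (p.1, x))) p.2

section

variable {M X : Type u}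

lemma omegaLaw_mk (U : Monad (Type u)) (m : M) (u : U.obj X) :
    omegaLaw M U X (m, u) = U.map (TypeCat.ofHom (Prod.mk m)) u :=
  rfl

lemma map_omegaLaw_omegaLaw_mk (S T : Monad (Type u)) (m : M) (u : T.obj (S.obj X)) :
    T.map (TypeCat.ofHom (omegaLaw M S X)) (omegaLaw M T (S.obj X) (m, u)) =
      (S.toFunctor ⋙ T.toFunctor).map (TypeCat.ofHom (Prod.mk m)) u := by
  rw [omegaLaw_mk, ← Functor.map_comp_apply]
  rfl

end

theorem yb_writer_general (M : Type u) (S T : Monad (Type u))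
    (l : (S.toFunctor ⋙ T.toFunctor) ⟶ (T.toFunctor ⋙ S.toFunctor)) :
    ∀ X : Type u,
      TypeCat.ofHom (omegaLaw M T (S.obj X)) ≫ T.map (TypeCat.ofHom (omegaLaw M S X)) ≫ l.app (M × X) =
      TypeCat.ofHom (fun p : M × T.obj (S.obj X) => (p.1, l.app X p.2)) ≫
        TypeCat.ofHom (omegaLaw M S (T.obj X)) ≫ S.map (TypeCat.ofHom (omegaLaw M T X)) := by
  intro X
  ext ⟨m, u⟩
  simp only [TypeCat.Fun.toFun_apply, types_comp_apply, TypeCat.ofHom_apply]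
  rw [map_omegaLaw_omegaLaw_mk, map_omegaLaw_omegaLaw_mk]
  exact NatTrans.naturality_apply l (TypeCat.ofHom (Prod.mk m)) u

/-- Proposition 4.12. For a monoid `M`, any monads `S`, `T` on
`Set` and any natural transformation `λ : TS ⇒ ST`, the Yang–Baxter equation
`λW ∘ Tω^S ∘ ω^T S = Sω^T ∘ ω^S T ∘ Wλ` holds. -/
theorem yb_writer (M : Type u) [Monoid M] (S T : Monad (Type u))
    (l : (S.toFunctor ⋙ T.toFunctor) ⟶ (T.toFunctor ⋙ S.toFunctor)) :
    ∀ X : Type u,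
      TypeCat.ofHom (omegaLaw M T (S.obj X)) ≫ T.map (TypeCat.ofHom (omegaLaw M S X)) ≫ l.app (M × X) =
      TypeCat.ofHom (fun p : M × T.obj (S.obj X) => (p.1, l.app X p.2)) ≫
        TypeCat.ofHom (omegaLaw M S (T.obj X)) ≫ S.map (TypeCat.ofHom (omegaLaw M T X)) :=
  yb_writer_general M S T l
end

section
/- (Converse implication of Winter's theorem) Let F be an endofunctor and S, T monads on a category C. Let λ⁰ : TS ⇒ ST be a distributive law, with composite monad S∘T := (ST, η^S η^T, μ^S μ^T ∘ Sλ⁰T). Let λ¹ : TF ⇒ FST be a natural transformation satisfying (η*): λ¹ ∘ η^T F = F(η^S η^T) and (μ*): λ¹ ∘ μ^T F = F(μ^S μ^T ∘ Sλ⁰T) ∘ λ¹ST ∘ Tλ¹, and let λ² : SF ⇒ FS be an EM-law (satisfying (η−) and (μ−) with respect to S). Assume the coherence axiom Fμ^S T ∘ FSλ⁰ ∘ λ¹S ∘ Tλ² = Fμ^S T ∘ λ²ST ∘ Sλ¹ ∘ λ⁰F. Then λ̂ := Fμ^S T ∘ λ²ST ∘ Sλ¹ : (ST)F ⇒ F(ST)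 is an EM-law for the composite monad S∘T, i.e. λ̂ ∘ η^{S∘T} F = Fη^{S∘T} and λ̂ ∘ μ^{S∘T} F = Fμ^{S∘T} ∘ λ̂(ST) ∘ (ST)λ̂, where η^{S∘T} = η^S η^T and μ^{S∘T} = μ^S μ^T ∘ Sλ⁰T. -/
/-!
The EM-law `λ²` makes every `F S Y` an `S`-algebra with structure map `Fμ^S ∘ λ²S`, and
`λ̂ = Fμ^S T ∘ λ²ST ∘ Sλ¹` is the extension of `λ¹` to the free algebra `S T F X`. Both sides of
the multiplication axiom are such extensions of maps `T S T F X ⟶ F S T X`, so it suffices to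
compare these. After (μ*) and naturality of `λ⁰`, that comparison is the coherence axiom at
`S T X`, followed by the identity `μ^{S∘T} ∘ STμ^S T = μ^{S∘T} ∘ μ^S TST ∘ Sλ⁰ST`, a consequence
of (μ+).
-/

open CategoryTheory

universe v u

variable {C : Type u} [Category.{v} C]

/-- An Eilenberg–Moore distributive law of a functor `F` over (the data of) a
monad `B`: a natural transformation `χ : BF ⇒ FB` satisfying (η−) and (μ−). -/
def IsEMLaw (B : MonadData C) (F : C ⥤ C) (χ : (F ⋙ B.F) ⟶ (B.F ⋙ F)) : Prop :=
  (∀ X : C, B.unit (F.obj X) ≫ χ.app X = F.map (B.unit X)) ∧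
  (∀ X : C, B.mult (F.obj X) ≫ χ.app X =
    B.F.map (χ.app X) ≫ χ.app (B.F.obj X) ≫ F.map (B.mult X))

section Winter

variable {C : Type u} [Category.{v} C] (F : C ⥤ C) (S T : Monad C)

/-- Winter's composite `λ̂ := Fμ^S T ∘ λ²ST ∘ Sλ¹ : (ST)F ⇒ F(ST)`. -/
def lhat (l1 : (F ⋙ T.toFunctor) ⟶ ((T.toFunctor ⋙ S.toFunctor) ⋙ F))
    (l2 : (F ⋙ S.toFunctor) ⟶ (S.toFunctor ⋙ F)) :
    (F ⋙ (T.toFunctor ⋙ S.toFunctor)) ⟶ ((T.toFunctor ⋙ S.toFunctor) ⋙ F) :=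
  Functor.whiskerRight l1 S.toFunctor ≫ Functor.whiskerLeft (T.toFunctor ⋙ S.toFunctor) l2 ≫
    Functor.whiskerRight (Functor.whiskerLeft T.toFunctor S.μ) F

section EMExtension

variable {F S} (l2 : (F ⋙ S.toFunctor) ⟶ (S.toFunctor ⋙ F))

def emExtend {Z Y : C} (f : Z ⟶ F.obj (S.obj Y)) : S.obj Z ⟶ F.obj (S.obj Y) :=
  S.map f ≫ l2.app (S.obj Y) ≫ F.map (S.μ.app Y)

lemma map_comp_emExtend {W Z Y : C} (h : W ⟶ Z) (f : Z ⟶ F.obj (S.obj Y)) :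
    S.map h ≫ emExtend l2 f = emExtend l2 (h ≫ f) := by
  simp [emExtend]

lemma unit_comp_emExtend (hη : ∀ X, S.η.app (F.obj X) ≫ l2.app X = F.map (S.η.app X))
    {Z Y : C} (f : Z ⟶ F.obj (S.obj Y)) : S.η.app Z ≫ emExtend l2 f = f := by
  have hf : S.η.app Z ≫ S.map f = f ≫ S.η.app (F.obj (S.obj Y)) := (S.η.naturality f).symm
  rw [emExtend, reassoc_of% hf, reassoc_of% hη, ← F.map_comp, S.left_unit]
  simp

lemma mu_comp_emExtend (hμ : ∀ X, S.μ.app (F.obj X) ≫ l2.app X =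
      S.map (l2.app X) ≫ l2.app (S.obj X) ≫ F.map (S.μ.app X))
    {Z Y : C} (f : Z ⟶ F.obj (S.obj Y)) :
    S.μ.app Z ≫ emExtend l2 f = emExtend l2 (emExtend l2 f) := by
  have hl2 : S.map (F.map (S.μ.app Y)) ≫ l2.app (S.obj Y) =
      l2.app (S.obj (S.obj Y)) ≫ F.map (S.map (S.μ.app Y)) := l2.naturality (S.μ.app Y)
  simp only [emExtend, Functor.map_comp, Category.assoc]
  rw [← S.mu_naturality_assoc, reassoc_of% hμ, ← F.map_comp, ← S.assoc, F.map_comp,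
    reassoc_of% hl2]

lemma emExtend_comp_map_bind {Z Y Y' : C} (f : Z ⟶ F.obj (S.obj Y)) (k : Y ⟶ S.obj Y') :
    emExtend l2 f ≫ F.map (S.map k ≫ S.μ.app Y') =
      emExtend l2 (f ≫ F.map (S.map k ≫ S.μ.app Y')) := by
  have hl2 : S.map (F.map (S.map k ≫ S.μ.app Y')) ≫ l2.app (S.obj Y') =
      l2.app (S.obj Y) ≫ F.map (S.map (S.map k ≫ S.μ.app Y')) := l2.naturality _
  simp only [emExtend, Functor.map_comp, Category.assoc] at hl2 ⊢
  rw [reassoc_of% hl2, ← F.map_comp, ← F.map_comp, ← F.map_comp, ← F.map_comp,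
    ← S.mu_naturality_assoc, ← S.assoc]

end EMExtension

section CompositeLaw

variable {F S T}

/-- `(compData S.data T.data l0).mult`, typed through `S` and `T` rather than `Monad.data`, so
that it can be rewritten. -/
def compMult (l0 : (S.toFunctor ⋙ T.toFunctor) ⟶ (T.toFunctor ⋙ S.toFunctor)) (X : C) :
    S.obj (T.obj (S.obj (T.obj X))) ⟶ S.obj (T.obj X) :=
  S.map (l0.app (T.obj X)) ≫ S.map (S.map (T.μ.app X)) ≫ S.μ.app (T.obj X)

lemma compMult_eq_map_comp_mu (l0 : (S.toFunctor ⋙ T.toFunctor) ⟶ (T.toFunctor ⋙ S.toFunctor))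
    (X : C) :
    compMult l0 X = S.map (l0.app (T.obj X) ≫ S.map (T.μ.app X)) ≫ S.μ.app (T.obj X) := by
  rw [compMult, Functor.map_comp_assoc]

lemma map_map_mu_comp_compMult
    {l0 : (S.toFunctor ⋙ T.toFunctor) ⟶ (T.toFunctor ⋙ S.toFunctor)}
    (hl0 : MuPlus S.data T.data l0) (X : C) :
    S.map (T.map (S.μ.app (T.obj X))) ≫ compMult l0 X =
      S.map (l0.app (S.obj (T.obj X))) ≫ S.μ.app (T.obj (S.obj (T.obj X))) ≫ compMult l0 X := by
  have h : T.map (S.μ.app (T.obj X)) ≫ l0.app (T.obj X) =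
      l0.app (S.obj (T.obj X)) ≫ S.map (l0.app (T.obj X)) ≫ S.μ.app (T.obj (T.obj X)) :=
    hl0 (T.obj X)
  rw [compMult, ← Functor.map_comp_assoc, h]
  simp only [Functor.map_comp, Category.assoc]
  rw [← S.mu_naturality_assoc, ← S.mu_naturality_assoc, ← S.assoc,
    ← Functor.map_comp_assoc S.toFunctor (S.μ.app _), ← S.mu_naturality, Functor.map_comp_assoc]

variable {l0 : (S.toFunctor ⋙ T.toFunctor) ⟶ (T.toFunctor ⋙ S.toFunctor)}
  {l1 : (F ⋙ T.toFunctor) ⟶ ((T.toFunctor ⋙ S.toFunctor) ⋙ F)}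
  {l2 : (F ⋙ S.toFunctor) ⟶ (S.toFunctor ⋙ F)}

lemma lhat_app (X : C) : (lhat F S T l1 l2).app X = emExtend l2 (l1.app X) :=
  rfl

lemma unit_comp_lhat_app
    (hl1η : ∀ X, T.η.app (F.obj X) ≫ l1.app X = F.map (T.η.app X ≫ S.η.app (T.obj X)))
    (hl2η : ∀ X, S.η.app (F.obj X) ≫ l2.app X = F.map (S.η.app X)) (X : C) :
    (T.η.app (F.obj X) ≫ S.η.app (T.obj (F.obj X))) ≫ (lhat F S T l1 l2).app X =
      F.map (T.η.app X ≫ S.η.app (T.obj X)) := by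
  rw [Category.assoc, lhat_app, unit_comp_emExtend l2 hl2η, hl1η]

lemma app_comp_map_mu_comp_lhat_app (hl0 : MuPlus S.data T.data l0)
    (hl1μ : ∀ X, T.μ.app (F.obj X) ≫ l1.app X =
      T.map (l1.app X) ≫ l1.app (S.obj (T.obj X)) ≫ F.map (compMult l0 X))
    (coh : ∀ X, T.map (l2.app X) ≫ l1.app (S.obj X) ≫ F.map (S.map (l0.app X)) ≫
      F.map (S.μ.app (T.obj X)) = l0.app (F.obj X) ≫ (lhat F S T l1 l2).app X) (X : C) :
    l0.app (T.obj (F.obj X)) ≫ S.map (T.μ.app (F.obj X)) ≫ (lhat F S T l1 l2).app X =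
      T.map ((lhat F S T l1 l2).app X) ≫ l1.app (S.obj (T.obj X)) ≫ F.map (compMult l0 X) := by
  have hl0l1 : T.map (S.map (l1.app X)) ≫ l0.app (F.obj (S.obj (T.obj X))) =
      l0.app (T.obj (F.obj X)) ≫ S.map (T.map (l1.app X)) := l0.naturality (l1.app X)
  have hl1μS : T.map (F.map (S.μ.app (T.obj X))) ≫ l1.app (S.obj (T.obj X)) =
      l1.app (S.obj (S.obj (T.obj X))) ≫ F.map (S.map (T.map (S.μ.app (T.obj X)))) :=
    l1.naturality (S.μ.app (T.obj X))
  calc _ = l0.app (T.obj (F.obj X)) ≫ S.map (T.map (l1.app X)) ≫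
          (lhat F S T l1 l2).app (S.obj (T.obj X)) ≫ F.map (compMult l0 X) := by
        rw [lhat_app, lhat_app, map_comp_emExtend, hl1μ, ← map_comp_emExtend,
          compMult_eq_map_comp_mu, emExtend_comp_map_bind]
    _ = T.map (S.map (l1.app X)) ≫ l0.app (F.obj (S.obj (T.obj X))) ≫
          (lhat F S T l1 l2).app (S.obj (T.obj X)) ≫ F.map (compMult l0 X) := by
        rw [reassoc_of% hl0l1]
    _ = T.map (S.map (l1.app X)) ≫ T.map (l2.app (S.obj (T.obj X))) ≫
          l1.app (S.obj (S.obj (T.obj X))) ≫ F.map (S.map (l0.app (S.obj (T.obj X))) ≫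
            S.μ.app (T.obj (S.obj (T.obj X))) ≫ compMult l0 X) := by
        rw [← reassoc_of% (coh (S.obj (T.obj X)))]
        simp only [Functor.map_comp]
    _ = T.map (S.map (l1.app X)) ≫ T.map (l2.app (S.obj (T.obj X))) ≫
          l1.app (S.obj (S.obj (T.obj X))) ≫
            F.map (S.map (T.map (S.μ.app (T.obj X))) ≫ compMult l0 X) := by
        rw [map_map_mu_comp_compMult hl0]
    _ = _ := by
        rw [lhat_app, emExtend]
        simp only [Functor.map_comp, Category.assoc]
        rw [reassoc_of% hl1μS]

lemma compMult_comp_lhat_app (hl0 : MuPlus S.data T.data l0)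
    (hl1μ : ∀ X, T.μ.app (F.obj X) ≫ l1.app X =
      T.map (l1.app X) ≫ l1.app (S.obj (T.obj X)) ≫ F.map (compMult l0 X))
    (hl2μ : ∀ X, S.μ.app (F.obj X) ≫ l2.app X =
      S.map (l2.app X) ≫ l2.app (S.obj X) ≫ F.map (S.μ.app X))
    (coh : ∀ X, T.map (l2.app X) ≫ l1.app (S.obj X) ≫ F.map (S.map (l0.app X)) ≫
      F.map (S.μ.app (T.obj X)) = l0.app (F.obj X) ≫ (lhat F S T l1 l2).app X) (X : C) :
    compMult l0 (F.obj X) ≫ (lhat F S T l1 l2).app X =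
      S.map (T.map ((lhat F S T l1 l2).app X)) ≫ (lhat F S T l1 l2).app (S.obj (T.obj X)) ≫
        F.map (compMult l0 X) :=
  calc _ = emExtend l2 (l0.app (T.obj (F.obj X)) ≫ S.map (T.μ.app (F.obj X)) ≫
          (lhat F S T l1 l2).app X) := by
        rw [compMult_eq_map_comp_mu, Category.assoc, lhat_app, mu_comp_emExtend l2 hl2μ,
          map_comp_emExtend, Category.assoc]
    _ = emExtend l2 (T.map ((lhat F S T l1 l2).app X) ≫ l1.app (S.obj (T.obj X)) ≫
          F.map (compMult l0 X)) := by
        rw [app_comp_map_mu_comp_lhat_app hl0 hl1μ coh]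
    _ = _ := by
        rw [← map_comp_emExtend, compMult_eq_map_comp_mu, ← emExtend_comp_map_bind]
        rfl

end CompositeLaw

/-- converse implication of Winter's theorem. Let `λ⁰ : TS ⇒ ST`
be a distributive law with composite monad `S∘T`, let `λ¹ : TF ⇒ FST` satisfy the
axioms (η*) and (μ*), and let `λ² : SF ⇒ FS` be an EM-law. If the coherence axiom
`Fμ^S T ∘ FSλ⁰ ∘ λ¹S ∘ Tλ² = Fμ^S T ∘ λ²ST ∘ Sλ¹ ∘ λ⁰F` holds, then
`λ̂ := Fμ^S T ∘ λ²ST ∘ Sλ¹` is an EM-law for the composite monad `S∘T`. -/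
theorem winter_converse
    (l0 : (S.toFunctor ⋙ T.toFunctor) ⟶ (T.toFunctor ⋙ S.toFunctor))
    (l1 : (F ⋙ T.toFunctor) ⟶ ((T.toFunctor ⋙ S.toFunctor) ⋙ F))
    (l2 : (F ⋙ S.toFunctor) ⟶ (S.toFunctor ⋙ F))
    (hl0 : IsDL S.data T.data l0)
    (hl1η : ∀ X : C, T.η.app (F.obj X) ≫ l1.app X =
      F.map ((compData S.data T.data l0).unit X))
    (hl1μ : ∀ X : C, T.μ.app (F.obj X) ≫ l1.app X =
      T.map (l1.app X) ≫ l1.app (S.obj (T.obj X)) ≫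
        F.map ((compData S.data T.data l0).mult X))
    (hl2 : IsEMLaw S.data F l2)
    (coh : ∀ X : C,
      T.map (l2.app X) ≫ l1.app (S.obj X) ≫ F.map (S.map (l0.app X)) ≫
          F.map (S.μ.app (T.obj X)) =
      l0.app (F.obj X) ≫ S.map (l1.app X) ≫ l2.app (S.obj (T.obj X)) ≫
          F.map (S.μ.app (T.obj X))) :
    IsEMLaw (compData S.data T.data l0) F (lhat F S T l1 l2) :=
  ⟨unit_comp_lhat_app hl1η hl2.1, compMult_comp_lhat_app hl0.2.1 hl1μ hl2.2 coh⟩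

end Winter
end
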